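/- arXiv:2603.23741 — 5 statements merged into one kernel-verified Lean document; each statement's English description precedes it below -/
import Mathlib

section
/- Let (P, w, d) be weighted differential. Then there is no point p of P that is covered by three distinct orphans; that is, there do not exist a point p and three pairwise distinct points a₁, a₂, a₃ of P such that each aᵢ covers exactly p. -/
/-
Let `L = Iic p` and let `A` be a set of at least two orphans covering `p`. For `S ⊆ A`,
`L ∪ S` is a finite lower set; its deletion points are `S` (or `{p}` if `S = ∅`), and its
insertion points are `A \ S` together with those insertion points `x` of `L ∪ A` for which every
`a ∈ A` below `x` lies in `S`. Summing the differential identities for all `L ∪ S` with sign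
`(-1) ^ #S`, everything cancels except `w p` on the deletion side and `(-1) ^ #A` times the
weight of the insertion points of `L ∪ A` lying above all of `A` on the insertion side.
For `#A = 3` this says that a nonpositive quantity equals `w p > 0`.
-/

/-- A finite lower set of a poset: a finite set closed downward. -/
def IsFinLowerSet {P : Type*} [PartialOrder P] (I : Set P) : Prop :=
  I.Finite ∧ ∀ ⦃q p : P⦄, q ≤ p → p ∈ I → q ∈ I

/-- The insertion points of a set `I`: the points not in `I` all of whose
strict lower bounds lie in `I` (the minimal elements of the complement). -/
def insPts {P : Type*} [PartialOrder P] (I : Set P) : Set P :=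
  {x | x ∉ I ∧ ∀ y : P, y < x → y ∈ I}

/-- The deletion points of a set `I`: its maximal elements. -/
def delPts {P : Type*} [PartialOrder P] (I : Set P) : Set P :=
  {x | x ∈ I ∧ ∀ y ∈ I, ¬ x < y}

/-- `(P, w, d)` is weighted differential: every principal lower set is finite,
all weights are positive, `d` is positive, and for every finite lower set `I`
the set of insertion points is finite and the total weight of insertion points
equals the total weight of deletion points plus `d`. -/
def WeightedDifferential {P : Type*} [PartialOrder P] (w : P → ℤ) (d : ℤ) : Prop :=
  (∀ p : P, {q : P | q ≤ p}.Finite) ∧ (∀ p : P, 0 < w p) ∧ 0 < d ∧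
    ∀ I : Set P, IsFinLowerSet I →
      (insPts I).Finite ∧ (∑ᶠ x ∈ insPts I, w x) = (∑ᶠ x ∈ delPts I, w x) + d

/-- `a` covers exactly `p`: the set of lower covers of `a` is precisely `{p}`. -/
def CoversExactly {P : Type*} [PartialOrder P] (a p : P) : Prop :=
  {x : P | x ⋖ a} = {p}

open Finset Set

theorem Finset.sum_powerset_neg_one_pow_card_mul_eq_zero {α R : Type*} [DecidableEq α]
    [CommRing R] {A : Finset α} {a : α} (ha : a ∈ A) {f : Finset α → R}
    (hf : ∀ t ⊆ A.erase a, f (insert a t) = f t) :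
    ∑ S ∈ A.powerset, (-1) ^ #S * f S = 0 := by
  rw [← insert_erase ha, sum_powerset_insert (notMem_erase a A), ← sum_add_distrib]
  refine sum_eq_zero fun t ht => ?_
  rw [mem_powerset] at ht
  rw [card_insert_of_notMem fun h => notMem_erase a A (ht h), hf t ht, pow_succ]
  ring

theorem Finset.sum_powerset_neg_one_pow_card_mul_finsum_mem {α β R : Type*} [CommRing R]
    (A : Finset α) (s : Finset α → Set β) (hs : ∀ S ∈ A.powerset, (s S).Finite) (f : β → R) :
    ∑ S ∈ A.powerset, (-1) ^ #S * ∑ᶠ x ∈ s S, f x =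
      ∑ᶠ x, ∑ S ∈ A.powerset, (-1) ^ #S * (s S).indicator f x := by
  rw [← sum_finsum_comm]
  · refine sum_congr rfl fun S hS => ?_
    rw [finsum_mem_def, mul_finsum' _ _ ((hs S hS).subset (support_indicator_subset))]
  · intro S hS
    exact (hs S hS).subset
      ((Function.support_mul_subset_right _ _).trans support_indicator_subset)

section

variable {P : Type*} [PartialOrder P]

theorem CoversExactly.covBy {a p : P} (h : CoversExactly a p) : p ⋖ a :=
  (Set.ext_iff.1 h p).2 rfl

theorem CoversExactly.le_of_lt {a p y : P} (h : CoversExactly a p) (hfin : (Iic a).Finite)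
    (hy : y < a) : y ≤ p := by
  obtain ⟨m, hym, hm⟩ := (hfin.subset fun z (hz : z ∈ Ico y a) => hz.2.le).exists_le_maximal
    (left_mem_Ico.2 hy)
  have hma : m ⋖ a :=
    ⟨hm.1.2, fun u hmu hua => hmu.not_ge <| hm.2 ⟨hym.trans hmu.le, hua⟩ hmu.le⟩
  rwa [show m = p from (Set.ext_iff.1 h m).1 hma] at hym

theorem CoversExactly.mem_insPts_Iic {a p : P} (h : CoversExactly a p) (hfin : (Iic a).Finite) :
    a ∈ insPts (Iic p) :=
  ⟨h.covBy.lt.not_ge, fun _ hy => h.le_of_lt hfin hy⟩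

theorem isFinLowerSet_Iic {p : P} (hfin : (Iic p).Finite) : IsFinLowerSet (Iic p) :=
  ⟨hfin, fun _ _ hqr hr => le_trans hqr hr⟩

theorem IsFinLowerSet.union_of_subset_insPts {L S : Set P} (hL : IsFinLowerSet L)
    (hS : S.Finite) (hSL : S ⊆ insPts L) : IsFinLowerSet (L ∪ S) := by
  refine ⟨hL.1.union hS, fun q r hqr hr => ?_⟩
  rcases hr with hr | hr
  · exact Or.inl (hL.2 hqr hr)
  · rcases hqr.eq_or_lt with rfl | hlt
    exacts [Or.inr hr, Or.inl ((hSL hr).2 q hlt)]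

theorem mem_insPts_union_iff {L : Set P} {A S : Finset P} (hA : (A : Set P) ⊆ insPts L)
    (hS : S ⊆ A) {x : P} :
    x ∈ insPts (L ∪ S) ↔ (x ∈ A ∧ x ∉ S) ∨ (x ∈ insPts (L ∪ A) ∧ ∀ a ∈ A, a < x → a ∈ S) := by
  constructor
  · rintro ⟨hxLS, hbelow⟩
    by_cases hxA : x ∈ A
    · exact Or.inl ⟨hxA, fun h => hxLS (Or.inr h)⟩
    · refine Or.inr ⟨⟨?_, fun y hy => ?_⟩, fun a ha hax => ?_⟩
      · rintro (h | h)
        exacts [hxLS (Or.inl h), hxA h]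
      · exact (hbelow y hy).imp_right fun h => hS h
      · exact (hbelow a hax).resolve_left (hA ha).1
  · rintro (⟨hxA, hxS⟩ | ⟨⟨hxN, hbelow⟩, hup⟩)
    · refine ⟨?_, fun y hy => Or.inl ((hA hxA).2 y hy)⟩
      rintro (h | h)
      exacts [(hA hxA).1 h, hxS h]
    · refine ⟨fun h => hxN (h.imp_right fun h => hS h), fun y hy => ?_⟩
      rcases hbelow y hy with h | h
      exacts [Or.inl h, Or.inr (hup y h hy)]

theorem mem_delPts_Iic_union_iff {p x : P} {S : Set P} (hS : S ⊆ insPts (Iic p))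
    (hpS : ∀ a ∈ S, p < a) : x ∈ delPts (Iic p ∪ S) ↔ x ∈ S ∨ (S = ∅ ∧ x = p) := by
  constructor
  · rintro ⟨hx | hx, hmax⟩
    · right
      obtain rfl | ⟨a, ha⟩ := S.eq_empty_or_nonempty
      · exact ⟨rfl, hx.eq_or_lt.resolve_right (hmax p (Or.inl le_rfl))⟩
      · exact (hmax a (Or.inr ha) (hx.trans_lt (hpS a ha))).elim
    · exact Or.inl hx
  · rintro (hx | ⟨rfl, rfl⟩)
    · refine ⟨Or.inr hx, ?_⟩
      rintro y (hy | hy) hxy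
      exacts [(hS hx).1 (hxy.le.trans hy), (hS hx).1 ((hS hy).2 x hxy)]
    · exact ⟨Or.inl le_rfl, fun y hy hxy => hxy.not_ge (by simpa using hy)⟩

theorem sum_powerset_neg_one_pow_card_mul_indicator_insPts {R : Type*} [CommRing R]
    {L : Set P} {A : Finset P} (hA : (A : Set P) ⊆ insPts L) (hA2 : 1 < #A) (w : P → R) (x : P) :
    ∑ S ∈ A.powerset, (-1) ^ #S * (insPts (L ∪ S)).indicator w x =
      (-1) ^ #A * {y ∈ insPts (L ∪ A) | ∀ a ∈ A, a < y}.indicator w x := by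
  classical
  by_cases hx : x ∈ {y ∈ insPts (L ∪ A) | ∀ a ∈ A, a < y}
  · have hxA : x ∉ A := fun h => hx.1.1 (Or.inr h)
    have hmem : ∀ S ⊆ A, x ∈ insPts (L ∪ S) ↔ S = A := by
      intro S hS
      rw [mem_insPts_union_iff hA hS]
      constructor
      · rintro (⟨h, -⟩ | ⟨-, hup⟩)
        exacts [absurd h hxA, hS.antisymm fun a ha => hup a ha (hx.2 a ha)]
      · rintro rfl
        exact Or.inr ⟨hx.1, fun a ha _ => ha⟩
    rw [indicator_of_mem hx, sum_eq_single_of_mem A (mem_powerset_self A),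
      indicator_of_mem ((hmem A le_rfl).2 rfl)]
    intro S hS hne
    rw [indicator_of_notMem (mt (hmem S (mem_powerset.1 hS)).1 hne), mul_zero]
  · rw [indicator_of_notMem hx, mul_zero]
    obtain ⟨b, hbA, hbx, hb⟩ : ∃ b ∈ A, b ≠ x ∧ (x ∈ insPts (L ∪ A) → ¬ b < x) := by
      by_cases hxN : x ∈ insPts (L ∪ A)
      · obtain ⟨b, hbA, hbx⟩ := not_forall₂.1 fun h => hx ⟨hxN, h⟩
        exact ⟨b, hbA, fun h => hxN.1 (Or.inr (h ▸ hbA)), fun _ => hbx⟩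
      · obtain ⟨b, hbA, hbx⟩ := exists_mem_ne hA2 x
        exact ⟨b, hbA, hbx, fun h => absurd h hxN⟩
    refine sum_powerset_neg_one_pow_card_mul_eq_zero hbA fun t ht => ?_
    have htA : t ⊆ A := ht.trans (erase_subset b A)
    have hinv : x ∈ insPts (L ∪ ↑(insert b t)) ↔ x ∈ insPts (L ∪ ↑t) := by
      rw [mem_insPts_union_iff hA (insert_subset hbA htA), mem_insPts_union_iff hA htA,
        Finset.mem_insert, or_iff_right hbx.symm]
      refine or_congr_right (and_congr_right fun hxN =>
        forall₂_congr fun a _ => imp_congr_right fun hax => ?_)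
      rw [Finset.mem_insert, or_iff_right fun hab : a = b => hb hxN (hab ▸ hax)]
    simp only [indicator_apply, hinv]

theorem sum_powerset_neg_one_pow_card_mul_indicator_delPts {R : Type*} [CommRing R] {p : P}
    {A : Finset P} (hA : (A : Set P) ⊆ insPts (Iic p)) (hpA : ∀ a ∈ A, p < a) (hA2 : 1 < #A)
    (w : P → R) (x : P) :
    ∑ S ∈ A.powerset, (-1) ^ #S * (delPts (Iic p ∪ S)).indicator w x =
      ({p} : Set P).indicator w x := by
  classical
  have hmem : ∀ S ⊆ A, x ∈ delPts (Iic p ∪ S) ↔ x ∈ S ∨ (S = ∅ ∧ x = p) := fun S hS => by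
    rw [mem_delPts_Iic_union_iff ((coe_subset.2 hS).trans hA) fun a ha => hpA a (hS ha),
      coe_eq_empty, mem_coe]
  by_cases hxp : x = p
  · subst hxp
    have hxA : x ∉ A := fun h => (hA h).1 le_rfl
    rw [indicator_of_mem (Set.mem_singleton x), sum_eq_single_of_mem ∅ (empty_mem_powerset A),
      indicator_of_mem ((hmem ∅ (empty_subset A)).2 (Or.inr ⟨rfl, rfl⟩)), Finset.card_empty,
      pow_zero, one_mul]
    intro S hS hne
    rw [indicator_of_notMem, mul_zero]
    rw [hmem S (mem_powerset.1 hS)]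
    rintro (h | ⟨h, -⟩)
    exacts [hxA (mem_powerset.1 hS h), hne h]
  · rw [indicator_of_notMem (mt Set.mem_singleton_iff.1 hxp)]
    obtain ⟨b, hbA, hbx⟩ := exists_mem_ne hA2 x
    refine sum_powerset_neg_one_pow_card_mul_eq_zero hbA fun t ht => ?_
    have htA : t ⊆ A := ht.trans (erase_subset b A)
    have hinv : x ∈ delPts (Iic p ∪ ↑(insert b t)) ↔ x ∈ delPts (Iic p ∪ ↑t) := by
      rw [hmem _ (insert_subset hbA htA), hmem t htA, Finset.mem_insert,
        or_iff_right hbx.symm]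
      simp only [hxp, and_false, or_false]
    simp only [indicator_apply, hinv]

theorem WeightedDifferential.neg_one_pow_card_mul_finsum_eq {w : P → ℤ} {d : ℤ}
    (h : WeightedDifferential w d) {p : P} {A : Finset P} (hA2 : 1 < #A)
    (hAp : ∀ a ∈ A, CoversExactly a p) :
    (-1) ^ #A * ∑ᶠ x ∈ {x ∈ insPts (Iic p ∪ A) | ∀ a ∈ A, a < x}, w x = w p := by
  obtain ⟨hfin, -, -, hdiff⟩ := h
  have hA : (A : Set P) ⊆ insPts (Iic p) := fun a ha => (hAp a ha).mem_insPts_Iic (hfin a)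
  have hpA : ∀ a ∈ A, p < a := fun a ha => (hAp a ha).covBy.lt
  have hdiffS : ∀ S ∈ A.powerset, (insPts (Iic p ∪ S)).Finite ∧
      ∑ᶠ x ∈ insPts (Iic p ∪ S), w x = ∑ᶠ x ∈ delPts (Iic p ∪ S), w x + d := fun S hS =>
    hdiff _ ((isFinLowerSet_Iic (hfin p)).union_of_subset_insPts S.finite_toSet
      ((coe_subset.2 (mem_powerset.1 hS)).trans hA))
  have hsum : ∑ S ∈ A.powerset, (-1) ^ #S * ∑ᶠ x ∈ insPts (Iic p ∪ S), w x =
      ∑ S ∈ A.powerset, (-1) ^ #S * ∑ᶠ x ∈ delPts (Iic p ∪ S), w x := by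
    have hd : ∑ S ∈ A.powerset, (-1 : ℤ) ^ #S * d = 0 := by
      rw [← sum_mul, sum_powerset_neg_one_pow_card_of_nonempty (card_pos.1 (by omega)),
        zero_mul]
    rw [← sub_eq_zero, ← sum_sub_distrib, ← hd]
    refine sum_congr rfl fun S hS => ?_
    rw [(hdiffS S hS).2]
    ring
  rw [sum_powerset_neg_one_pow_card_mul_finsum_mem A _ fun S hS => (hdiffS S hS).1,
    sum_powerset_neg_one_pow_card_mul_finsum_mem A _
      fun S _ => ((hfin p).union S.finite_toSet).subset fun _ hx => hx.1] at hsum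
  simp only [sum_powerset_neg_one_pow_card_mul_indicator_insPts hA hA2,
    sum_powerset_neg_one_pow_card_mul_indicator_delPts hA hpA hA2] at hsum
  rwa [← mul_finsum, ← finsum_mem_def, ← finsum_mem_def, finsum_mem_singleton] at hsum

end

/-- In a weighted differential poset, no point is covered
by three distinct orphans. -/
theorem no_point_covered_by_three_orphans {P : Type*} [PartialOrder P]
    (w : P → ℤ) (d : ℤ) (h : WeightedDifferential w d) :
    ¬ ∃ (p a₁ a₂ a₃ : P), a₁ ≠ a₂ ∧ a₁ ≠ a₃ ∧ a₂ ≠ a₃ ∧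
      CoversExactly a₁ p ∧ CoversExactly a₂ p ∧ CoversExactly a₃ p := by
  classical
  rintro ⟨p, a₁, a₂, a₃, h12, h13, h23, c₁, c₂, c₃⟩
  have hcard : #{a₁, a₂, a₃} = 3 := card_eq_three.2 ⟨a₁, a₂, a₃, h12, h13, h23, rfl⟩
  have key := h.neg_one_pow_card_mul_finsum_eq (A := {a₁, a₂, a₃}) (by omega) fun a ha => by
    simp only [Finset.mem_insert, Finset.mem_singleton] at ha
    rcases ha with rfl | rfl | rfl <;> assumption
  refine (h.2.1 p).not_ge ?_
  rw [← key, hcard]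
  exact mul_nonpos_of_nonpos_of_nonneg (by norm_num)
    (finsum_nonneg fun x => finsum_nonneg fun _ => (h.2.1 x).le)
end

section
/- Let P be a partially ordered set in which every principal lower set is finite, let p ∈ P, and let a be a point that covers exactly p. Then the set of insertion points of the principal lower set [a] = {q ∈ P | q ≤ a} is the disjoint union of (i) the insertion points of [p] = {q ∈ P | q ≤ p} other than a, and (ii) the points covering exactly a. -/
/-! Because `Iic a` is finite, every `y < a` lies below some lower cover of `a`, so `a` covers
exactly `p` iff `p` is the greatest element of `Iio a`, i.e. `Iio a = Iic p`. Split the insertion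
points `x` of `Iic a` by whether `a < x`: those above `a` are exactly the points covering exactly
`a`, and the others are the insertion points of `Iic p = Iio a` other than `a`. -/

open Set

section CoversExactly

variable {P : Type*} [PartialOrder P] {a b p : P}

theorem exists_le_covBy_of_lt_of_finite_Iic (hb : (Iic b).Finite) (h : a < b) :
    ∃ c, a ≤ c ∧ c ⋖ b := by
  obtain ⟨c, hac, hc⟩ := (hb.subset Iio_subset_Iic_self).exists_le_maximal (mem_Iio.2 h)
  exact ⟨c, hac, hc.prop, fun z hcz hzb => hcz.not_ge (hc.le_of_ge hzb hcz.le)⟩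

theorem coversExactly_iff_forall_lt_le (ha : (Iic a).Finite) :
    CoversExactly a p ↔ p < a ∧ ∀ y < a, y ≤ p := by
  constructor
  · intro h
    have hcov : ∀ x, x ⋖ a ↔ x = p := fun x => Set.ext_iff.1 h x
    refine ⟨((hcov p).2 rfl).lt, fun y hy => ?_⟩
    obtain ⟨c, hyc, hca⟩ := exists_le_covBy_of_lt_of_finite_Iic ha hy
    exact (hcov c).1 hca ▸ hyc
  · rintro ⟨hpa, hle⟩
    ext x
    refine ⟨fun hxa => ?_, fun hx => ?_⟩
    · exact (hle x hxa.lt).eq_of_not_lt fun hxp => hxa.2 hxp hpa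
    · rw [mem_singleton_iff.1 hx]
      exact ⟨hpa, fun z hpz hza => (hle z hza).not_gt hpz⟩

theorem setOf_coversExactly_eq (hfin : ∀ b : P, (Iic b).Finite) :
    {b | CoversExactly b a} = insPts (Iic a) ∩ Ioi a := by
  ext b
  rw [mem_ofPred_eq, coversExactly_iff_forall_lt_le (hfin b)]
  exact ⟨fun ⟨hab, hle⟩ => ⟨⟨hab.not_ge, hle⟩, hab⟩, fun ⟨⟨_, hle⟩, hab⟩ => ⟨hab, hle⟩⟩

theorem insPts_Iic_sdiff_singleton_eq (hpa : p < a) (hle : ∀ y < a, y ≤ p) :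
    insPts (Iic p) \ {a} = insPts (Iic a) \ Ioi a := by
  ext x
  simp only [insPts, mem_sdiff, mem_ofPred_eq, mem_Iic, mem_Ioi, mem_singleton_iff]
  constructor
  · rintro ⟨⟨hxp, hbelow⟩, hxa⟩
    exact ⟨⟨fun hx => hxp (hle x (hx.lt_of_ne hxa)), fun y hy => (hbelow y hy).trans hpa.le⟩,
      fun hax => hpa.not_ge (hbelow a hax)⟩
  · rintro ⟨⟨hxa, hbelow⟩, hax⟩
    refine ⟨⟨fun hx => hxa (hx.trans hpa.le), fun y hy => hle y ?_⟩, fun h => hxa h.le⟩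
    exact (hbelow y hy).lt_of_ne fun hya => hax (hya ▸ hy)

end CoversExactly

/-- If `a` covers exactly `p`, the insertion points of `[a]`
are the disjoint union of the insertion points of `[p]` other than `a` and the
points covering exactly `a`. -/
theorem insPts_principal_of_covers_exactly {P : Type*} [PartialOrder P]
    (hfin : ∀ p : P, {q : P | q ≤ p}.Finite)
    (p a : P) (ha : CoversExactly a p) :
    insPts {q : P | q ≤ a} =
      (insPts {q : P | q ≤ p} \ {a}) ∪ {b : P | CoversExactly b a} ∧
    Disjoint (insPts {q : P | q ≤ p} \ {a}) {b : P | CoversExactly b a} := by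
  obtain ⟨hpa, hle⟩ := (coversExactly_iff_forall_lt_le (hfin a)).1 ha
  simp only [Iic_def] at hfin ⊢
  rw [insPts_Iic_sdiff_singleton_eq hpa hle, setOf_coversExactly_eq hfin]
  exact ⟨(sdiff_union_inter _ _).symm, disjoint_sdiff_inter⟩
end

section
/- Let P be a partially ordered set in which every principal lower set is finite, let p ∈ P, and let a and a' be two distinct points each of which covers exactly p. Let J = {q ∈ P | q ≤ a or q ≤ a'} be the lower set generated by {a, a'}. Then the set of insertion points of J is the pairwise disjoint union of (i) the insertion points of [p] = {q ∈ P | q ≤ p} other than a and a', (ii) the points covering exactly a, (iii) the points covering exactly a', and (iv) the points whose set of lower covers is exactly {a, a'}. -/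
/-!
Since `a` and `a'` cover exactly `p` and every strict lower bound of a point lies below one of
its lower covers, both `a` and `a'` have `[p]` as their set of strict lower bounds, so
`J = [p] ∪ {a, a'}`. A point above neither `a` nor `a'` is then an insertion point of `J` exactly
when it is one of `[p]`. A point `x` above `a` (say) is an insertion point of `J` exactly when all
its lower covers lie in `{a, a'}`: a lower cover `z ≤ p` would give `z < a < x`.
-/

open Set

theorem isStronglyCoatomic_of_finite_Iic {P : Type*} [PartialOrder P]
    (hfin : ∀ p : P, (Iic p).Finite) : IsStronglyCoatomic P :=
  letI := LocallyFiniteOrder.ofFiniteIcc fun _ b => (hfin b).subset Icc_subset_Iic_self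
  inferInstance

theorem notMem_insPts_of_lt {P : Type*} [PartialOrder P] {I : Set P} {b x : P}
    (hb : Iio b = I) (hbx : b < x) : x ∉ insPts I := fun hx => (lt_irrefl b) (hb ▸ hx.2 b hbx : b ∈ Iio b)

theorem disjoint_insPts_setOf_covBy_subset {P : Type*} [PartialOrder P] {I B : Set P}
    (hB : ∀ b ∈ B, Iio b = I) :
    Disjoint (insPts I) {x | {z | z ⋖ x}.Nonempty ∧ {z | z ⋖ x} ⊆ B} :=
  disjoint_right.2 fun _ ⟨⟨b, hbx⟩, hsub⟩ => notMem_insPts_of_lt (hB b (hsub hbx)) hbx.lt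

section StronglyCoatomic

variable {P : Type*} [PartialOrder P] [IsStronglyCoatomic P]

theorem Iio_eq_Iic_of_coversExactly {a p : P} (h : CoversExactly a p) : Iio a = Iic p := by
  have hmem : ∀ z, z ⋖ a ↔ z = p := fun z => Set.ext_iff.mp h z
  ext q
  refine ⟨fun hq => ?_, fun hq => hq.trans_lt ((hmem p).2 rfl).lt⟩
  obtain ⟨z, hqz, hza⟩ := exists_le_covBy_of_lt hq
  exact (hmem z).1 hza ▸ hqz

theorem insPts_union_of_forall_Iio_eq {I B : Set P} (hB : ∀ b ∈ B, Iio b = I) :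
    insPts (I ∪ B) = (insPts I \ B) ∪ {x | {z | z ⋖ x}.Nonempty ∧ {z | z ⋖ x} ⊆ B} := by
  ext x
  constructor
  · rintro ⟨hxIB, hbelow⟩
    by_cases habove : ∃ b ∈ B, b < x
    · obtain ⟨b, hbB, hbx⟩ := habove
      obtain ⟨z, -, hzx⟩ := exists_le_covBy_of_lt hbx
      refine Or.inr ⟨⟨z, hzx⟩, fun z hzx => (hbelow z hzx.lt).resolve_left fun hzI => ?_⟩
      exact hzx.2 (show z ∈ Iio b from hB b hbB ▸ hzI) hbx
    · push Not at habove
      refine Or.inl ⟨⟨fun hxI => hxIB (Or.inl hxI), fun y hy => ?_⟩, fun hxB => hxIB (Or.inr hxB)⟩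
      exact (hbelow y hy).resolve_right fun hyB => habove y hyB hy
  · rintro (⟨⟨hxI, hbelow⟩, hxB⟩ | ⟨⟨b, hbx⟩, hsub⟩)
    · exact ⟨fun hx => hx.elim hxI hxB, fun y hy => Or.inl (hbelow y hy)⟩
    · have hbB := hsub hbx
      refine ⟨?_, fun y hy => ?_⟩
      · rintro (hxI | hxB)
        · exact hbx.lt.not_gt (show x ∈ Iio b from hB b hbB ▸ hxI)
        · have hbI : b ∈ I := hB x hxB ▸ show b ∈ Iio x from hbx.lt
          exact lt_irrefl b (show b ∈ Iio b from hB b hbB ▸ hbI)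
      · obtain ⟨z, hyz, hzx⟩ := exists_le_covBy_of_lt hy
        rcases hyz.eq_or_lt with rfl | hyz
        · exact Or.inr (hsub hzx)
        · exact Or.inl (hB z (hsub hzx) ▸ hyz)

theorem setOf_le_or_le_eq_of_coversExactly {p a a' : P} (ha : CoversExactly a p)
    (ha' : CoversExactly a' p) : {q : P | q ≤ a ∨ q ≤ a'} = Iic p ∪ {a, a'} := by
  change Iic a ∪ Iic a' = _
  rw [← Iio_insert (a := a), ← Iio_insert (a := a'), Iio_eq_Iic_of_coversExactly ha,
    Iio_eq_Iic_of_coversExactly ha']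
  ext q
  simp only [mem_union, mem_insert_iff, mem_singleton_iff]
  tauto

end StronglyCoatomic

theorem setOf_covBy_subset_pair {P : Type*} [PartialOrder P] (a a' : P) :
    {x : P | {z | z ⋖ x}.Nonempty ∧ {z | z ⋖ x} ⊆ {a, a'}} =
      {b : P | CoversExactly b a} ∪ {b : P | CoversExactly b a'} ∪
        {c : P | {x : P | x ⋖ c} = {a, a'}} := by
  ext x
  simp only [mem_ofPred_eq, mem_union, CoversExactly]
  constructor
  · rintro ⟨hne, hsub⟩
    rcases hne.subset_pair_iff_eq.1 hsub with h | h | h <;> simp only [h, true_or, or_true]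
  · rintro ((h | h) | h) <;> simp [h]

/-- If `a ≠ a'` each cover exactly `p` and
`J = {q | q ≤ a ∨ q ≤ a'}`, the insertion points of `J` are the pairwise
disjoint union of (i) the insertion points of `[p]` other than `a` and `a'`,
(ii) the points covering exactly `a`, (iii) the points covering exactly `a'`,
and (iv) the points whose set of lower covers is exactly `{a, a'}`. -/
theorem insPts_join_of_two_orphans {P : Type*} [PartialOrder P]
    (hfin : ∀ p : P, {q : P | q ≤ p}.Finite)
    (p a a' : P) (hne : a ≠ a')
    (ha : CoversExactly a p) (ha' : CoversExactly a' p) :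
    insPts {q : P | q ≤ a ∨ q ≤ a'} =
      (insPts {q : P | q ≤ p} \ {a, a'}) ∪ {b : P | CoversExactly b a} ∪
        {b : P | CoversExactly b a'} ∪ {c : P | {x : P | x ⋖ c} = {a, a'}} ∧
    List.Pairwise Disjoint
      [insPts {q : P | q ≤ p} \ {a, a'}, {b : P | CoversExactly b a},
        {b : P | CoversExactly b a'}, {c : P | {x : P | x ⋖ c} = {a, a'}}] := by
  have := isStronglyCoatomic_of_finite_Iic hfin
  have hB : ∀ b ∈ ({a, a'} : Set P), Iio b = Iic p := by
    rintro b (rfl | rfl)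
    exacts [Iio_eq_Iic_of_coversExactly ha, Iio_eq_Iic_of_coversExactly ha']
  have hcovers : Disjoint (insPts (Iic p) \ {a, a'})
      ({b : P | CoversExactly b a} ∪ {b : P | CoversExactly b a'} ∪
        {c : P | {x : P | x ⋖ c} = {a, a'}}) :=
    setOf_covBy_subset_pair a a' ▸ (disjoint_insPts_setOf_covBy_subset hB).mono_left sdiff_subset
  have hdist : ∀ {s t : Set P}, s ≠ t →
      Disjoint {x : P | {z | z ⋖ x} = s} {x : P | {z | z ⋖ x} = t} := fun hst =>
    (disjoint_singleton.2 hst).preimage _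
  refine ⟨?_, ?_⟩
  · rw [setOf_le_or_le_eq_of_coversExactly ha ha', insPts_union_of_forall_Iio_eq hB,
      setOf_covBy_subset_pair, ← union_assoc, ← union_assoc]
    rfl
  · simp only [disjoint_union_right] at hcovers
    simp only [List.pairwise_cons, List.mem_cons, List.not_mem_nil, forall_eq_or_imp,
      List.Pairwise.nil, IsEmpty.forall_iff, implies_true, and_true, or_false, forall_eq]
    refine ⟨⟨hcovers.1.1, hcovers.1.2, hcovers.2⟩, ⟨hdist ?_, hdist ?_⟩, hdist ?_⟩
    · exact fun h => hne (singleton_eq_singleton_iff.1 h)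
    · exact fun h => hne (h.symm ▸ mem_insert_of_mem a rfl : a' ∈ ({a} : Set P)).symm
    · exact fun h => hne (h.symm ▸ mem_insert a {a'} : a ∈ ({a'} : Set P))
end

section
/- Let d be a positive integer and consider the poset L of d-tuples of Young diagrams, i.e. functions from Fin d to Young diagrams ordered componentwise by containment. Then for every element f of L, the set of elements covering f and the set of elements covered by f are both finite, and the number of elements covering f equals the number of elements covered by f plus d. In other words, L = 𝕐^{×d}, the d-fold cartesian power of Young's lattice, is a d-differential distributive lattice. -/
/-!
Covers of `f` in a product of posets change exactly one coordinate `i` to a cover of `f i`, so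
the number of covers of `f` is the sum over `i` of the number of covers of `f i`, and likewise
for lower covers. In Young's lattice a cover adds a cell `(i, rowLen i)` in a row `i` that is `0`
or strictly shorter than row `i - 1`, and a lower cover removes the last cell of a row `i` that is
strictly longer than row `i + 1`; `i ↦ i + 1` matches the latter rows with the nonzero former
ones, so each diagram has exactly one more cover than lower covers.
-/

open Function

section Pi

variable {ι : Type*} [DecidableEq ι] {α : ι → Type*}

theorem Pi.pairwise_disjoint_image_update (a : ∀ i, α i) {s : ∀ i, Set (α i)}
    (hs : ∀ i, a i ∉ s i) : Pairwise (Disjoint on fun i => update a i '' s i) := by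
  intro i j hij
  rw [onFun, Set.disjoint_left]
  rintro _ ⟨x, hx, rfl⟩ ⟨y, -, hyx⟩
  have := congrFun hyx i
  rw [update_of_ne hij, update_self] at this
  exact hs i (this ▸ hx)

theorem Pi.ncard_iUnion_image_update [Fintype ι] (a : ∀ i, α i) {s : ∀ i, Set (α i)}
    (hfin : ∀ i, (s i).Finite) (hs : ∀ i, a i ∉ s i) :
    (⋃ i, update a i '' s i).ncard = ∑ i, (s i).ncard := by
  rw [Set.ncard_iUnion_of_finite (fun i => (hfin i).image _)
    (Pi.pairwise_disjoint_image_update a hs), finsum_eq_sum_of_fintype]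
  simp_rw [Set.ncard_image_of_injective _ (update_injective a _)]

variable [∀ i, PartialOrder (α i)]

theorem Pi.setOf_covBy_eq_iUnion (a : ∀ i, α i) :
    {b | a ⋖ b} = ⋃ i, update a i '' {x | a i ⋖ x} := by
  ext b
  simp [Pi.covBy_iff_exists_right_eq, eq_comm]

theorem Pi.setOf_covBy_eq_iUnion' (a : ∀ i, α i) :
    {b | b ⋖ a} = ⋃ i, update a i '' {x | x ⋖ a i} := by
  ext b
  simp [Pi.covBy_iff_exists_left_eq, eq_comm]

end Pi

namespace YoungDiagram

def Iic (c : ℕ × ℕ) : YoungDiagram :=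
  ⟨Finset.Iic c, by simpa using isLowerSet_Iic c⟩

@[simp]
theorem mem_Iic {c x : ℕ × ℕ} : x ∈ Iic c ↔ x ≤ c :=
  Finset.mem_Iic

def sdiffIci (μ : YoungDiagram) (c : ℕ × ℕ) : YoungDiagram :=
  ⟨μ.cells.filter (¬ c ≤ ·), fun _ _ hxy hy => by
    simp only [Finset.coe_filter] at hy ⊢
    exact ⟨μ.isLowerSet hxy hy.1, fun hc => hy.2 (hc.trans hxy)⟩⟩

def outerCorners (μ : YoungDiagram) : Set (ℕ × ℕ) :=
  {c | c ∉ μ ∧ ∀ x < c, x ∈ μ}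

def innerCorners (μ : YoungDiagram) : Set (ℕ × ℕ) :=
  {c | c ∈ μ ∧ ∀ x, c < x → x ∉ μ}

variable {μ ν : YoungDiagram}

theorem cells_sup_Iic {c : ℕ × ℕ} (hc : ∀ x < c, x ∈ μ) :
    (μ ⊔ Iic c).cells = insert c μ.cells := by
  ext x
  simp only [cells_sup, Finset.mem_union, Finset.mem_insert, mem_cells, mem_Iic]
  constructor
  · rintro (hx | hx)
    · exact .inr hx
    · exact hx.eq_or_lt.imp id (hc x)
  · rintro (rfl | hx)
    · exact .inr le_rfl
    · exact .inl hx

theorem cells_sdiffIci {c : ℕ × ℕ} (hc : ∀ x, c < x → x ∉ μ) :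
    (μ.sdiffIci c).cells = μ.cells.erase c := by
  ext x
  simp only [sdiffIci, Finset.mem_filter, Finset.mem_erase, mem_cells]
  constructor
  · rintro ⟨hx, hcx⟩
    exact ⟨fun h => hcx h.ge, hx⟩
  · rintro ⟨hxc, hx⟩
    exact ⟨hx, fun hcx => hc x (hcx.lt_of_ne' hxc) hx⟩

theorem covBy_iff_exists_insert : μ ⋖ ν ↔ ∃ c ∉ μ, ν.cells = insert c μ.cells := by
  constructor
  · intro h
    obtain ⟨x, hxν, hxμ⟩ : ∃ x, x ∈ ν ∧ x ∉ μ := by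
      simpa [← cells_subset_iff, Finset.not_subset] using h.lt.not_ge
    obtain ⟨c, hc⟩ :=
      exists_minimal_of_wellFoundedLT (fun x => x ∈ ν ∧ x ∉ μ) ⟨x, hxν, hxμ⟩
    have hlt : ∀ x < c, x ∈ μ := fun x hx =>
      not_not.1 fun hxμ => hc.not_prop_of_lt hx ⟨ν.isLowerSet hx.le hc.prop.1, hxμ⟩
    have hμ : μ < μ ⊔ Iic c := by
      rw [← cells_ssubset_iff, cells_sup_Iic hlt]
      exact Finset.ssubset_insert hc.prop.2
    have hν : μ ⊔ Iic c ≤ ν :=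
      sup_le h.le fun x hx => ν.isLowerSet (mem_Iic.1 hx) hc.prop.1
    refine ⟨c, hc.prop.2, ?_⟩
    rw [← (h.eq_or_eq hμ.le hν).resolve_left hμ.ne', cells_sup_Iic hlt]
  · rintro ⟨c, hc, hν⟩
    refine ⟨?_, fun κ h₁ h₂ => ?_⟩
    · rw [← cells_ssubset_iff, hν]
      exact Finset.ssubset_insert hc
    · rw [← cells_ssubset_iff] at h₁ h₂
      exact (Finset.covBy_insert hc).2 h₁ (hν ▸ h₂)

def addableRows (μ : YoungDiagram) : Set ℕ := {i | i = 0 ∨ μ.rowLen i < μ.rowLen (i - 1)}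

def removableRows (μ : YoungDiagram) : Set ℕ := {i | μ.rowLen (i + 1) < μ.rowLen i}

theorem removableRows_finite (μ : YoungDiagram) : (removableRows μ).Finite :=
  (Set.finite_Iio (μ.colLen 0)).subset fun _ hi =>
    mem_iff_lt_colLen.1 (mem_iff_lt_rowLen.2 ((Nat.zero_le _).trans_lt hi))

theorem addableRows_eq (μ : YoungDiagram) :
    addableRows μ = insert 0 ((· + 1) '' removableRows μ) := by
  ext (_ | i) <;> simp [addableRows, removableRows]

theorem addableRows_finite (μ : YoungDiagram) : (addableRows μ).Finite := by
  rw [addableRows_eq]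
  exact ((removableRows_finite μ).image _).insert 0

theorem ncard_addableRows (μ : YoungDiagram) :
    (addableRows μ).ncard = (removableRows μ).ncard + 1 := by
  rw [addableRows_eq, Set.ncard_insert_of_notMem (by simp) ((removableRows_finite μ).image _),
    Set.ncard_image_of_injective _ (add_left_injective 1)]

theorem outerCorners_eq (μ : YoungDiagram) :
    outerCorners μ = (fun i => (i, μ.rowLen i)) '' addableRows μ := by
  ext ⟨i, j⟩
  simp only [outerCorners, Set.mem_image, Prod.mk.injEq]
  constructor
  · rintro ⟨hc, hlt⟩
    have hj : j = μ.rowLen i := by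
      have : μ.rowLen i ≤ j := not_lt.1 (mt mem_iff_lt_rowLen.2 hc)
      rcases Nat.eq_zero_or_pos j with rfl | hj
      · omega
      · have := mem_iff_lt_rowLen.1 (hlt (i, j - 1) (Prod.mk_lt_mk_iff_right.2 (by omega)))
        omega
    refine ⟨i, ?_, rfl, hj.symm⟩
    rcases Nat.eq_zero_or_pos i with rfl | hi
    · exact .inl rfl
    · have := mem_iff_lt_rowLen.1 (hlt (i - 1, j) (Prod.mk_lt_mk_iff_left.2 (by omega)))
      exact .inr (hj ▸ this)
  · rintro ⟨i, hi, rfl, rfl⟩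
    refine ⟨by simp [mem_iff_lt_rowLen], fun ⟨a, b⟩ hab => mem_iff_lt_rowLen.2 ?_⟩
    rcases Prod.mk_lt_mk.1 hab with ⟨ha, hb⟩ | ⟨ha, hb⟩
    · have hi : μ.rowLen i < μ.rowLen (i - 1) := hi.resolve_left (by omega)
      have := μ.rowLen_anti a (i - 1) (by omega)
      omega
    · exact hb.trans_le (μ.rowLen_anti a i ha)

theorem innerCorners_eq (μ : YoungDiagram) :
    innerCorners μ = (fun i => (i, μ.rowLen i - 1)) '' removableRows μ := by
  ext ⟨i, j⟩
  simp only [innerCorners, Set.mem_image, Prod.mk.injEq]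
  constructor
  · rintro ⟨hc, hgt⟩
    have hj := mem_iff_lt_rowLen.1 hc
    have hright := mt mem_iff_lt_rowLen.2 (hgt (i, j + 1) (Prod.mk_lt_mk_iff_right.2 (by omega)))
    have hbelow := mt mem_iff_lt_rowLen.2 (hgt (i + 1, j) (Prod.mk_lt_mk_iff_left.2 (by omega)))
    exact ⟨i, show μ.rowLen (i + 1) < μ.rowLen i by omega, rfl, by omega⟩
  · rintro ⟨i, hi, rfl, rfl⟩
    have hi : μ.rowLen (i + 1) < μ.rowLen i := hi
    refine ⟨mem_iff_lt_rowLen.2 (by omega), fun ⟨a, b⟩ hab => mt mem_iff_lt_rowLen.1 ?_⟩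
    rcases Prod.mk_lt_mk.1 hab with ⟨ha, hb⟩ | ⟨ha, hb⟩
    · have := μ.rowLen_anti (i + 1) a ha
      omega
    · have := μ.rowLen_anti i a ha
      omega

theorem setOf_covBy_eq_image_outerCorners (μ : YoungDiagram) :
    {ν | μ ⋖ ν} = (μ ⊔ Iic ·) '' outerCorners μ := by
  ext ν
  constructor
  · intro h
    obtain ⟨c, hc, hν⟩ := covBy_iff_exists_insert.1 h
    have hlt : ∀ x < c, x ∈ μ := fun x hx => by
      have : x ∈ ν.cells := ν.isLowerSet hx.le (by simp [hν])
      rw [hν, Finset.mem_insert] at this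
      exact this.resolve_left hx.ne
    exact ⟨c, ⟨hc, hlt⟩, YoungDiagram.ext ((cells_sup_Iic hlt).trans hν.symm)⟩
  · rintro ⟨c, ⟨hc, hlt⟩, rfl⟩
    exact covBy_iff_exists_insert.2 ⟨c, hc, cells_sup_Iic hlt⟩

theorem setOf_covBy_eq_image_innerCorners (μ : YoungDiagram) :
    {ν | ν ⋖ μ} = μ.sdiffIci '' innerCorners μ := by
  ext ν
  constructor
  · intro h
    obtain ⟨c, hc, hμ⟩ := covBy_iff_exists_insert.1 h
    have hgt : ∀ x, c < x → x ∉ μ := fun x hx hxμ => by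
      rw [← mem_cells, hμ, Finset.mem_insert] at hxμ
      exact hc (ν.isLowerSet hx.le (hxμ.resolve_left hx.ne'))
    refine ⟨c, ⟨by simp [← mem_cells, hμ], hgt⟩, YoungDiagram.ext ?_⟩
    rw [cells_sdiffIci hgt, hμ, Finset.erase_insert hc]
  · rintro ⟨c, ⟨hc, hgt⟩, rfl⟩
    refine covBy_iff_exists_insert.2 ⟨c, ?_, ?_⟩
    · simp [← mem_cells, cells_sdiffIci hgt]
    · rw [cells_sdiffIci hgt, Finset.insert_erase hc]

theorem injOn_sup_Iic (μ : YoungDiagram) : Set.InjOn (μ ⊔ Iic ·) (outerCorners μ) :=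
  fun c hc c' hc' h => by
    have := congrArg cells h
    rwa [cells_sup_Iic hc.2, cells_sup_Iic hc'.2, Finset.insert_inj hc.1] at this

theorem injOn_sdiffIci (μ : YoungDiagram) : Set.InjOn μ.sdiffIci (innerCorners μ) :=
  fun c hc c' hc' h => by
    have := congrArg cells h
    rwa [cells_sdiffIci hc.2, cells_sdiffIci hc'.2, Finset.erase_inj _ hc.1] at this

theorem finite_setOf_covBy (μ : YoungDiagram) : {ν | μ ⋖ ν}.Finite := by
  rw [setOf_covBy_eq_image_outerCorners, outerCorners_eq]
  exact ((addableRows_finite μ).image _).image _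

theorem finite_setOf_covBy' (μ : YoungDiagram) : {ν | ν ⋖ μ}.Finite := by
  rw [setOf_covBy_eq_image_innerCorners, innerCorners_eq]
  exact ((removableRows_finite μ).image _).image _

theorem ncard_setOf_covBy (μ : YoungDiagram) :
    {ν | μ ⋖ ν}.ncard = {ν | ν ⋖ μ}.ncard + 1 := by
  have graph_injective (g : ℕ → ℕ) : Injective fun i => (i, g i) :=
    fun _ _ h => congrArg Prod.fst h
  rw [setOf_covBy_eq_image_outerCorners, setOf_covBy_eq_image_innerCorners,
    (injOn_sup_Iic μ).ncard_image, (injOn_sdiffIci μ).ncard_image,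
    outerCorners_eq, innerCorners_eq, Set.ncard_image_of_injective _ (graph_injective _),
    Set.ncard_image_of_injective _ (graph_injective _), ncard_addableRows]

end YoungDiagram

theorem youngPower_isDifferential_general (d : ℕ)
    (f : Fin d → YoungDiagram) :
    {g : Fin d → YoungDiagram | f ⋖ g}.Finite ∧
    {g : Fin d → YoungDiagram | g ⋖ f}.Finite ∧
    {g : Fin d → YoungDiagram | f ⋖ g}.ncard =
      {g : Fin d → YoungDiagram | g ⋖ f}.ncard + d := by
  have hup i := YoungDiagram.finite_setOf_covBy (f i)
  have hdown i := YoungDiagram.finite_setOf_covBy' (f i)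
  rw [Pi.setOf_covBy_eq_iUnion, Pi.setOf_covBy_eq_iUnion']
  refine ⟨Set.finite_iUnion fun i => (hup i).image _,
    Set.finite_iUnion fun i => (hdown i).image _, ?_⟩
  rw [Pi.ncard_iUnion_image_update f hup fun _ h => h.lt.false,
    Pi.ncard_iUnion_image_update f hdown fun _ h => h.lt.false]
  simp [YoungDiagram.ncard_setOf_covBy, Finset.sum_add_distrib]

/-- For a positive integer `d`, in the poset
`𝕐^{×d} = Fin d → YoungDiagram` of `d`-tuples of Young diagrams ordered
componentwise by containment, every element has finitely many covers and
finitely many lower covers, and the number of covers of each element equals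
the number of its lower covers plus `d`: `𝕐^{×d}` is a `d`-differential
distributive lattice. -/
theorem youngPower_isDifferential (d : ℕ) (hd : 0 < d)
    (f : Fin d → YoungDiagram) :
    {g : Fin d → YoungDiagram | f ⋖ g}.Finite ∧
    {g : Fin d → YoungDiagram | g ⋖ f}.Finite ∧
    {g : Fin d → YoungDiagram | f ⋖ g}.ncard =
      {g : Fin d → YoungDiagram | g ⋖ f}.ncard + d :=
  youngPower_isDifferential_general d f
end

section
/- Let d be a positive integer and let L be a distributive lattice with a least element such that for every x ∈ L the principal lower set {y ∈ L | y ≤ x} is finite, every x ∈ L is covered by finitely many elements, and for every x ∈ L the number of elements covering x equals the number of elements covered by x plus d. Then L is order-isomorphic to 𝕐^{×d}, the poset of functions from Fin d to Young diagrams ordered componentwise by containment. In particular, there exists exactly one d-differential distributive lattice up to isomorphism, namely 𝕐^{×d}. -/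
/-!
Let `P` be the poset of sup-irreducible elements of `L`. As `L` is finitary,
`x ↦ {p ∈ P | p ≤ x}` identifies `L` with the finite lower sets of `P`: the elements covering `x`
correspond to the elements that can be adjoined to its lower set, and those covered by `x` to the
maximal elements of that lower set. So every finite lower set of `P` has exactly `d` more addable
than maximal elements.

Comparing a lower set `S` with `S ∪ {p}`, for `p` addable, shows that the number of elements `r > p`
addable to `S ∪ {p}` plus the number of maximal elements of `S` below `p` is always `2`. Level by
level this forces `P` to be `d` disjoint copies of the quadrant `ℕ × ℕ`: each of the `d` minimal
elements has exactly two elements covering only it, each other cell `(i, 0)` or `(0, j)` has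
exactly one, and each pair of cells `(i + 1, j)`, `(i, j + 1)` has exactly one common cover, while
a count shows that nothing else can be adjoined. Finite lower sets of `d` copies of `ℕ × ℕ` are
`d`-tuples of Young diagrams.
-/

open Set

namespace DifferentialDistribLattice

section Addable

variable {α : Type*} [PartialOrder α] {S : Set α} {p : α}

def addable (S : Set α) : Set α := {p | p ∉ S ∧ Iio p ⊆ S}

lemma isLowerSet_insert_of_mem_addable (hS : IsLowerSet S) (hp : p ∈ addable S) :
    IsLowerSet (insert p S) := by
  rintro a b hba (rfl | ha)
  · rcases hba.eq_or_lt with rfl | hlt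
    · exact mem_insert _ _
    · exact mem_insert_of_mem _ (hp.2 hlt)
  · exact mem_insert_of_mem _ (hS hba ha)

lemma isLowerSet_sdiff_singleton_of_maximal (hS : IsLowerSet S) (hp : Maximal (· ∈ S) p) :
    IsLowerSet (S \ {p}) := by
  rintro a b hba ⟨ha, hap⟩
  refine ⟨hS hba ha, ?_⟩
  rintro rfl
  exact hap (hp.eq_of_le ha hba).symm

lemma wellFoundedLT_of_finite_Iic (hfin : ∀ x : α, (Iic x).Finite) : WellFoundedLT α :=
  StrictMono.wellFoundedLT (f := fun x => (Iic x).ncard) fun _ y hxy =>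
    ncard_lt_ncard (Iic_ssubset_Iic.2 hxy) (hfin y)

/-- Through Birkhoff duality, this is the `d`-differential condition on the lattice of finite lower
sets of `α`. -/
def HasAddableExcess (d : ℕ) (α : Type*) [PartialOrder α] : Prop :=
  ∀ S : Set α, S.Finite → IsLowerSet S →
    (addable S).Finite ∧ (addable S).ncard = {p | Maximal (· ∈ S) p}.ncard + d

end Addable

section Birkhoff

abbrev SupIrreds (L : Type*) [SemilatticeSup L] := {a : L // SupIrred a}

variable {L : Type*} [DistribLattice L]

def irredsBelow (x : L) : Set (SupIrreds L) := {p | (p : L) ≤ x}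

lemma isLowerSet_irredsBelow (x : L) : IsLowerSet (irredsBelow x) :=
  fun _ _ hqp hp => le_trans hqp hp

lemma irredsBelow_finite (hlow : ∀ x : L, (Iic x).Finite) (x : L) : (irredsBelow x).Finite :=
  (hlow x).preimage Subtype.val_injective.injOn

variable [OrderBot L]

lemma irredsBelow_finset_sup {T : Finset (SupIrreds L)} (hT : IsLowerSet (T : Set (SupIrreds L))) :
    irredsBelow (T.sup Subtype.val) = T := by
  ext q
  refine ⟨fun hq => ?_, fun hq => Finset.le_sup (f := Subtype.val) hq⟩
  obtain ⟨p, hp, hqp⟩ := q.2.supPrime.le_finset_sup.1 hq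
  exact hT hqp hp

lemma exists_irredsBelow_eq {S : Set (SupIrreds L)} (hS : S.Finite) (hl : IsLowerSet S) :
    ∃ x, irredsBelow x = S := by
  lift S to Finset (SupIrreds L) using hS
  exact ⟨_, irredsBelow_finset_sup hl⟩

variable (hlow : ∀ x : L, (Iic x).Finite)
include hlow

lemma le_iff_irredsBelow_subset {x y : L} : x ≤ y ↔ irredsBelow x ⊆ irredsBelow y := by
  refine ⟨fun h _ hp => le_trans hp h, fun h => ?_⟩
  have := wellFoundedLT_of_finite_Iic hlow
  obtain ⟨s, rfl, hs⟩ := exists_supIrred_decomposition x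
  refine Finset.sup_le fun a ha => h (?_ : (⟨a, hs ha⟩ : SupIrreds L) ∈ _)
  exact Finset.le_sup (f := id) ha

def irredsBelowEmb : L ↪o Set (SupIrreds L) :=
  OrderEmbedding.ofMapLEIff irredsBelow fun _ _ => (le_iff_irredsBelow_subset hlow).symm

lemma irredsBelow_injective : Function.Injective (irredsBelow (L := L)) :=
  (irredsBelowEmb hlow).injective

lemma covBy_of_irredsBelow_covBy {x y : L} (h : irredsBelow x ⋖ irredsBelow y) : x ⋖ y :=
  CovBy.of_image (irredsBelowEmb hlow) h

lemma exists_insert_of_covBy {x y : L} (h : x ⋖ y) :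
    ∃ p ∈ addable (irredsBelow x), irredsBelow y = insert p (irredsBelow x) := by
  have hlt : irredsBelow x ⊂ irredsBelow y := (irredsBelowEmb hlow).lt_iff_lt.2 h.lt
  obtain ⟨p, hp⟩ := ((irredsBelow_finite hlow y).sdiff (t := irredsBelow x)).exists_minimal
    (sdiff_nonempty.2 hlt.not_subset)
  have hadd : p ∈ addable (irredsBelow x) := by
    refine ⟨hp.prop.2, fun q hq => by_contra fun hqx => ?_⟩
    exact hp.not_lt ⟨isLowerSet_irredsBelow y hq.le hp.prop.1, hqx⟩ hq
  obtain ⟨z, hz⟩ := exists_irredsBelow_eq ((irredsBelow_finite hlow x).insert p)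
    (isLowerSet_insert_of_mem_addable (isLowerSet_irredsBelow x) hadd)
  have hxz : x < z := by
    rw [lt_iff_le_not_ge, le_iff_irredsBelow_subset hlow, le_iff_irredsBelow_subset hlow, hz]
    exact ⟨subset_insert _ _, fun h => hadd.1 (h (mem_insert _ _))⟩
  have hzy : z ≤ y := by
    rw [le_iff_irredsBelow_subset hlow, hz]
    exact insert_subset hp.prop.1 hlt.subset
  obtain rfl : z = y := by_contra fun hne => h.2 hxz (lt_of_le_of_ne hzy hne)
  exact ⟨p, hadd, hz⟩

lemma irredsBelow_image_covBy (x : L) :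
    irredsBelow '' {y | x ⋖ y} = (insert · (irredsBelow x)) '' addable (irredsBelow x) := by
  ext T
  constructor
  · rintro ⟨y, hy, rfl⟩
    obtain ⟨p, hp, hy⟩ := exists_insert_of_covBy hlow hy
    exact ⟨p, hp, hy.symm⟩
  · rintro ⟨p, hp, rfl⟩
    obtain ⟨y, hy⟩ := exists_irredsBelow_eq ((irredsBelow_finite hlow x).insert p)
      (isLowerSet_insert_of_mem_addable (isLowerSet_irredsBelow x) hp)
    exact ⟨y, covBy_of_irredsBelow_covBy hlow (hy ▸ covBy_insert hp.1), hy⟩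

lemma irredsBelow_image_coveredBy (x : L) :
    irredsBelow '' {y | y ⋖ x} =
      (irredsBelow x \ {·}) '' {p | Maximal (· ∈ irredsBelow x) p} := by
  ext T
  constructor
  · rintro ⟨y, hy, rfl⟩
    obtain ⟨p, hp, hx⟩ := exists_insert_of_covBy hlow hy
    refine ⟨p, maximal_iff_forall_gt.2 ⟨hx ▸ mem_insert _ _, fun q hpq hq => ?_⟩, ?_⟩
    · rw [hx] at hq
      exact hp.1 (isLowerSet_irredsBelow y hpq.le (hq.resolve_left hpq.ne'))
    · show irredsBelow x \ {p} = _
      rw [hx, insert_sdiff_self_of_notMem hp.1]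
  · rintro ⟨p, hp, rfl⟩
    obtain ⟨y, hy⟩ := exists_irredsBelow_eq ((irredsBelow_finite hlow x).sdiff)
      (isLowerSet_sdiff_singleton_of_maximal (isLowerSet_irredsBelow x) hp)
    exact ⟨y, covBy_of_irredsBelow_covBy hlow (hy ▸ sdiff_singleton_covBy hp.prop), hy⟩

lemma ncard_covBy_eq (x : L) : {y | x ⋖ y}.ncard = (addable (irredsBelow x)).ncard := by
  rw [← ncard_image_of_injective _ (irredsBelow_injective hlow), irredsBelow_image_covBy hlow,
    InjOn.ncard_image fun p hp q _ h => (insert_inj hp.1).1 h]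

lemma ncard_coveredBy_eq (x : L) :
    {y | y ⋖ x}.ncard = {p | Maximal (· ∈ irredsBelow x) p}.ncard := by
  rw [← ncard_image_of_injective _ (irredsBelow_injective hlow), irredsBelow_image_coveredBy hlow,
    InjOn.ncard_image fun p hp q hq h => ?_]
  by_contra hne
  have : q ∈ irredsBelow x \ {p} := ⟨hq.prop, Ne.symm hne⟩
  exact (h ▸ this).2 rfl

lemma addable_irredsBelow_finite {x : L} (h : {y | x ⋖ y}.Finite) :
    (addable (irredsBelow x)).Finite := by
  refine Finite.of_finite_image ?_ fun p hp q _ h => (insert_inj hp.1).1 h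
  rw [← irredsBelow_image_covBy hlow]
  exact h.image _

theorem hasAddableExcess_supIrreds {d : ℕ} (hcov : ∀ x : L, {y | x ⋖ y}.Finite)
    (hdiff : ∀ x : L, {y | x ⋖ y}.ncard = {y | y ⋖ x}.ncard + d) :
    HasAddableExcess d (SupIrreds L) := by
  intro S hS hl
  obtain ⟨x, rfl⟩ := exists_irredsBelow_eq hS hl
  refine ⟨addable_irredsBelow_finite hlow (hcov x), ?_⟩
  rw [← ncard_covBy_eq hlow, ← ncard_coveredBy_eq hlow, hdiff]

end Birkhoff

section Excess

variable {α : Type*} [PartialOrder α] {d : ℕ} {S T : Set α} {p u v : α}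

lemma addable_insert (hS : IsLowerSet S) (hp : p ∈ addable S) :
    addable (insert p S) = (addable S \ {p}) ∪ {r | p < r ∧ Iio r ⊆ insert p S} := by
  ext r
  simp only [addable, mem_union, mem_sdiff, mem_singleton_iff, mem_ofPred_eq, mem_insert_iff,
    not_or]
  constructor
  · rintro ⟨⟨hrp, hrS⟩, hr⟩
    by_cases hpr : p < r
    · exact Or.inr ⟨hpr, hr⟩
    · refine Or.inl ⟨⟨hrS, fun q hq => (hr hq).resolve_left ?_⟩, hrp⟩
      rintro rfl
      exact hpr hq
  · rintro (⟨⟨hrS, hr⟩, hrp⟩ | ⟨hpr, hr⟩)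
    · exact ⟨⟨hrp, hrS⟩, hr.trans (subset_insert _ _)⟩
    · exact ⟨⟨hpr.ne', fun h => hp.1 (hS hpr.le h)⟩, hr⟩

lemma maximal_insert (hS : IsLowerSet S) (hp : p ∈ addable S) :
    {q | Maximal (· ∈ insert p S) q} = insert p {q | Maximal (· ∈ S) q ∧ ¬ q < p} := by
  ext q
  simp only [mem_ofPred_eq, mem_insert_iff, maximal_iff_forall_gt]
  constructor
  · rintro ⟨rfl | hqS, hmax⟩
    · exact Or.inl rfl
    · exact Or.inr ⟨⟨hqS, fun r hqr hr => hmax hqr (Or.inr hr)⟩,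
        fun hqp => hmax hqp (Or.inl rfl)⟩
  · rintro (rfl | ⟨⟨hqS, hmax⟩, hqp⟩)
    · refine ⟨Or.inl rfl, fun r hqr => ?_⟩
      rintro (rfl | hr)
      · exact lt_irrefl _ hqr
      · exact hp.1 (hS hqr.le hr)
    · refine ⟨Or.inr hqS, fun r hqr => ?_⟩
      rintro (rfl | hr)
      · exact hqp hqr
      · exact hmax hqr hr

theorem ncard_addable_above_add_ncard_maximal_below (h : HasAddableExcess d α) (hS : S.Finite)
    (hl : IsLowerSet S) (hp : p ∈ addable S) :
    {r | p < r ∧ Iio r ⊆ insert p S}.ncard + {q | Maximal (· ∈ S) q ∧ q < p}.ncard = 2 := by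
  obtain ⟨hAfin, hA⟩ := h S hS hl
  obtain ⟨hA'fin, hA'⟩ := h _ (hS.insert p) (isLowerSet_insert_of_mem_addable hl hp)
  have hMfin : {q | Maximal (· ∈ S) q}.Finite := hS.subset fun q hq => hq.prop
  have hdisj : Disjoint (addable S \ {p}) {r | p < r ∧ Iio r ⊆ insert p S} :=
    disjoint_left.2 fun r hr hr' => hp.1 (hr.1.2 hr'.1)
  rw [addable_insert hl hp] at hA'fin hA'
  rw [maximal_insert hl hp, ncard_union_eq hdisj hAfin.sdiff (hA'fin.subset subset_union_right),
    ncard_insert_of_notMem (fun h => hp.1 h.1.prop) (hMfin.subset fun q hq => hq.1)] at hA'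
  have hsplit := ncard_inter_add_ncard_sdiff_eq_ncard {q | Maximal (· ∈ S) q} (Iio p) hMfin
  have hA1 := ncard_sdiff_singleton_add_one hp hAfin
  change {q | Maximal (· ∈ S) q ∧ q < p}.ncard + {q | Maximal (· ∈ S) q ∧ ¬ q < p}.ncard = _
    at hsplit
  omega

theorem ncard_Iio_eq_Iic_add_ncard_maximal_Iio (h : HasAddableExcess d α) (hfin : (Iio p).Finite) :
    {r | Iio r = Iic p}.ncard + {q | Maximal (· ∈ Iio p) q}.ncard = 2 := by
  have key := ncard_addable_above_add_ncard_maximal_below h hfin (isLowerSet_Iio p)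
    ⟨lt_irrefl p, subset_rfl⟩
  rwa [Iio_insert, show {r | p < r ∧ Iio r ⊆ Iic p} = {r | Iio r = Iic p} from ?_,
    show {q | Maximal (· ∈ Iio p) q ∧ q < p} = {q | Maximal (· ∈ Iio p) q} from ?_] at key
  · ext q
    exact and_iff_left_of_imp fun hq => hq.prop
  · ext r
    refine ⟨fun hr => hr.2.antisymm (Iic_subset_Iio.2 hr.1), fun hr => ⟨?_, hr.le⟩⟩
    exact hr.ge (mem_Iic.2 le_rfl)

theorem ncard_above_add_ncard_maximal_sdiff_below (h : HasAddableExcess d α) (hT : T.Finite)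
    (hl : IsLowerSet T) (hv : Maximal (· ∈ T) v) :
    {r | v < r ∧ Iio r ⊆ T}.ncard + {q | Maximal (· ∈ T \ {v}) q ∧ q < v}.ncard = 2 := by
  have hvadd : v ∈ addable (T \ {v}) :=
    ⟨fun hv' => hv'.2 rfl, fun q hq => ⟨hl hq.le hv.prop, hq.ne⟩⟩
  have key := ncard_addable_above_add_ncard_maximal_below h hT.sdiff
    (isLowerSet_sdiff_singleton_of_maximal hl hv) hvadd
  rwa [insert_sdiff_singleton, insert_eq_of_mem hv.prop] at key

lemma eq_Iic_union_Iic_of_maximal_eq (hS : S.Finite) (hl : IsLowerSet S)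
    (h : {q | Maximal (· ∈ S) q} = {u, v}) : S = Iic u ∪ Iic v := by
  have hu : u ∈ S := (show u ∈ {q | Maximal (· ∈ S) q} from h ▸ mem_insert _ _).prop
  have hv : v ∈ S := (show v ∈ {q | Maximal (· ∈ S) q} from h ▸ mem_insert_of_mem _ rfl).prop
  refine Subset.antisymm (fun z hz => ?_) (union_subset (fun z hz => hl hz hu) fun z hz => hl hz hv)
  obtain ⟨w, hzw, hw⟩ := hS.exists_le_maximal hz
  rcases (show w ∈ ({u, v} : Set α) from h ▸ hw) with rfl | rfl
  · exact Or.inl hzw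
  · exact Or.inr hzw

end Excess

/-- Cells `(k, i, j)` of `d` disjoint copies of the quadrant `ℕ × ℕ`, up to level `i + j ≤ n`,
labelled by elements of `α` so that the labelling is an order embedding onto a lower set of `α`;
the values of `f` at cells of level `> n` play no role. -/
structure Grid (α : Type*) [PartialOrder α] (d n : ℕ) where
  f : Fin d → ℕ → ℕ → α
  le_iff : ∀ ⦃k i j k' i' j'⦄, i + j ≤ n → i' + j' ≤ n →
    (f k i j ≤ f k' i' j' ↔ k = k' ∧ i ≤ i' ∧ j ≤ j')
  exists_eq_of_le : ∀ ⦃k i j⦄, i + j ≤ n → ∀ q ≤ f k i j,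
    ∃ k' i' j', i' + j' ≤ n ∧ f k' i' j' = q

namespace Grid

variable {α : Type*} [PartialOrder α] {d n : ℕ} (Γ : Grid α d n)
  {k k' : Fin d} {a b a' b' i j i' j' : ℕ}

def carrier : Set α := {p | ∃ k i j, i + j ≤ n ∧ Γ.f k i j = p}

def below (k : Fin d) (a b : ℕ) : Set α :=
  {q | ∃ x y, x + y ≤ n ∧ x ≤ a ∧ y ≤ b ∧ Γ.f k x y = q}

lemma f_mem_carrier (h : i + j ≤ n) : Γ.f k i j ∈ Γ.carrier := ⟨k, i, j, h, rfl⟩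

lemma eq_of_f_eq (h1 : i + j ≤ n) (h2 : i' + j' ≤ n) (h : Γ.f k i j = Γ.f k' i' j') :
    k = k' ∧ i = i' ∧ j = j' := by
  obtain ⟨hk, hi, hj⟩ := (Γ.le_iff h1 h2).1 h.le
  obtain ⟨-, hi', hj'⟩ := (Γ.le_iff h2 h1).1 h.ge
  exact ⟨hk, hi.antisymm hi', hj.antisymm hj'⟩

lemma f_lt_f_iff (h1 : i + j ≤ n) (h2 : i' + j' ≤ n) :
    Γ.f k i j < Γ.f k' i' j' ↔ k = k' ∧ i ≤ i' ∧ j ≤ j' ∧ i + j < i' + j' := by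
  rw [lt_iff_le_and_ne, Γ.le_iff h1 h2]
  constructor
  · rintro ⟨⟨rfl, hi, hj⟩, hne⟩
    refine ⟨rfl, hi, hj, lt_of_le_of_ne (by omega) fun h => hne ?_⟩
    obtain rfl : i = i' := by omega
    obtain rfl : j = j' := by omega
    rfl
  · rintro ⟨rfl, hi, hj, hlt⟩
    exact ⟨⟨rfl, hi, hj⟩, fun h => by have := Γ.eq_of_f_eq h1 h2 h; omega⟩

lemma exists_eq_of_lt (hab : a + b ≤ n) {q : α} (hq : q < Γ.f k a b) :
    ∃ x y, x ≤ a ∧ y ≤ b ∧ x + y < a + b ∧ Γ.f k x y = q := by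
  obtain ⟨k', x, y, hxy, rfl⟩ := Γ.exists_eq_of_le hab q hq.le
  obtain ⟨rfl, hx, hy, hlt⟩ := (Γ.f_lt_f_iff hxy hab).1 hq
  exact ⟨x, y, hx, hy, hlt, rfl⟩

lemma carrier_finite : Γ.carrier.Finite := by
  refine ((finite_univ (α := Fin d)).prod ((finite_Iic n).prod (finite_Iic n))).image
    (fun t => Γ.f t.1 t.2.1 t.2.2) |>.subset ?_
  rintro p ⟨k, i, j, hij, rfl⟩
  exact ⟨(k, i, j), ⟨trivial, by simp only [mem_Iic]; omega, by simp only [mem_Iic]; omega⟩, rfl⟩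

lemma isLowerSet_carrier : IsLowerSet Γ.carrier := by
  rintro p q hqp ⟨k, i, j, hij, rfl⟩
  exact Γ.exists_eq_of_le hij q hqp

lemma below_subset_carrier : Γ.below k a b ⊆ Γ.carrier := by
  rintro q ⟨x, y, hxy, -, -, rfl⟩
  exact Γ.f_mem_carrier hxy

lemma f_mem_below_iff (h : i + j ≤ n) : Γ.f k' i j ∈ Γ.below k a b ↔ k' = k ∧ i ≤ a ∧ j ≤ b := by
  constructor
  · rintro ⟨x, y, hxy, hx, hy, he⟩
    obtain ⟨rfl, rfl, rfl⟩ := Γ.eq_of_f_eq hxy h he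
    exact ⟨rfl, hx, hy⟩
  · rintro ⟨rfl, hi, hj⟩
    exact ⟨i, j, h, hi, hj, rfl⟩

lemma Iic_eq_below (hab : a + b ≤ n) : Iic (Γ.f k a b) = Γ.below k a b := by
  ext q
  constructor
  · intro hq
    obtain ⟨k', x, y, hxy, rfl⟩ := Γ.exists_eq_of_le hab q hq
    obtain ⟨rfl, hx, hy⟩ := (Γ.le_iff hxy hab).1 hq
    exact ⟨x, y, hxy, hx, hy, rfl⟩
  · rintro ⟨x, y, hxy, hx, hy, rfl⟩
    exact (Γ.le_iff hxy hab).2 ⟨rfl, hx, hy⟩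

lemma below_min : Γ.below k a b = Γ.below k (min a n) (min b n) := by
  ext q
  constructor
  · rintro ⟨x, y, hxy, hx, hy, rfl⟩
    exact ⟨x, y, hxy, by omega, by omega, rfl⟩
  · rintro ⟨x, y, hxy, hx, hy, rfl⟩
    exact ⟨x, y, hxy, by omega, by omega, rfl⟩

lemma f_lt_f_succ_left (h : i + j < n) : Γ.f k i j < Γ.f k (i + 1) j :=
  (Γ.f_lt_f_iff h.le (by omega)).2 ⟨rfl, by omega, le_rfl, by omega⟩

lemma f_lt_f_succ_right (h : i + j < n) : Γ.f k i j < Γ.f k i (j + 1) :=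
  (Γ.f_lt_f_iff h.le (by omega)).2 ⟨rfl, le_rfl, by omega, by omega⟩

lemma maximal_iff {p : α} : Maximal (· ∈ Γ.carrier) p ↔ ∃ k i j, i + j = n ∧ Γ.f k i j = p := by
  constructor
  · rintro hp
    obtain ⟨k, i, j, hij, rfl⟩ := hp.prop
    refine ⟨k, i, j, le_antisymm hij (not_lt.1 fun hlt => ?_), rfl⟩
    exact hp.not_gt (Γ.f_mem_carrier (by omega)) (Γ.f_lt_f_succ_left hlt)
  · rintro ⟨k, i, j, hij, rfl⟩
    refine maximal_iff_forall_gt.2 ⟨Γ.f_mem_carrier hij.le, ?_⟩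
    rintro _ hlt ⟨k', i', j', h', rfl⟩
    have := (Γ.f_lt_f_iff hij.le h').1 hlt
    omega

lemma ncard_maximal : {p | Maximal (· ∈ Γ.carrier) p}.ncard = d * (n + 1) := by
  have himg : {p | Maximal (· ∈ Γ.carrier) p} =
      (fun t : Fin d × Fin (n + 1) => Γ.f t.1 t.2 (n - t.2)) '' univ := by
    ext p
    rw [mem_ofPred_eq, maximal_iff]
    constructor
    · rintro ⟨k, i, j, hij, rfl⟩
      exact ⟨(k, ⟨i, by omega⟩), trivial, by simp only; congr 1; omega⟩
    · rintro ⟨⟨k, i⟩, -, rfl⟩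
      exact ⟨k, i, n - i, by omega, rfl⟩
  rw [himg, InjOn.ncard_image, ncard_univ, Nat.card_eq_fintype_card, Fintype.card_prod,
    Fintype.card_fin, Fintype.card_fin]
  rintro ⟨k, i⟩ - ⟨k', i'⟩ - h
  obtain ⟨rfl, hi, -⟩ := Γ.eq_of_f_eq (by omega) (by omega) h
  simp only [Prod.mk.injEq, true_and]
  exact Fin.ext hi

def swap : Grid α d n where
  f k i j := Γ.f k j i
  le_iff _ _ _ _ _ _ h1 h2 := by rw [Γ.le_iff (by omega) (by omega)]; tauto
  exists_eq_of_le k i j h q hq := by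
    obtain ⟨k', i', j', h', rfl⟩ := Γ.exists_eq_of_le (show j + i ≤ n by omega) q hq
    exact ⟨k', j', i', by omega, rfl⟩


lemma Iic_subset_carrier (hab : a + b ≤ n) : Iic (Γ.f k a b) ⊆ Γ.carrier :=
  fun _ hq => Γ.isLowerSet_carrier hq (Γ.f_mem_carrier hab)

lemma below_succ_succ (hab : a + b + 1 = n) :
    Γ.below k (a + 1) (b + 1) = Iic (Γ.f k (a + 1) b) ∪ Iic (Γ.f k a (b + 1)) := by
  rw [Γ.Iic_eq_below (a := a + 1) (b := b) (by omega),
    Γ.Iic_eq_below (a := a) (b := b + 1) (by omega)]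
  ext q
  constructor
  · rintro ⟨x, y, hxy, hx, hy, rfl⟩
    by_cases hyb : y ≤ b
    · exact Or.inl ⟨x, y, hxy, hx, hyb, rfl⟩
    · exact Or.inr ⟨x, y, hxy, by omega, hy, rfl⟩
  · rintro (⟨x, y, hxy, hx, hy, rfl⟩ | ⟨x, y, hxy, hx, hy, rfl⟩) <;>
      exact ⟨x, y, hxy, by omega, by omega, rfl⟩

lemma eq_of_below_eq (hn : 0 < n) (hab : a + b = n + 1) (hab' : a' + b' = n + 1)
    (h : Γ.below k a b = Γ.below k a' b') : a = a' := by
  have key : ∀ {a b a' b'}, Γ.below k a b = Γ.below k a' b' → min a n ≤ a' ∧ min b n ≤ b' := by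
    intro a b a' b' h
    have h₁ : Γ.f k (min a n) 0 ∈ Γ.below k a' b' :=
      h ▸ (Γ.f_mem_below_iff (by omega)).2 ⟨rfl, by omega, by omega⟩
    have h₂ : Γ.f k 0 (min b n) ∈ Γ.below k a' b' :=
      h ▸ (Γ.f_mem_below_iff (by omega)).2 ⟨rfl, by omega, by omega⟩
    exact ⟨((Γ.f_mem_below_iff (by omega)).1 h₁).2.1, ((Γ.f_mem_below_iff (by omega)).1 h₂).2.2⟩
  have := key h
  have := key h.symm
  omega

lemma not_maximal_sdiff_of_lt (hab : a + b = n) {q : α}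
    (hq : Maximal (· ∈ Γ.carrier \ {Γ.f k a b}) q) : ¬ q < Γ.f k a b := by
  intro hlt
  obtain ⟨x, y, -, -, hxy, rfl⟩ := Γ.exists_eq_of_lt hab.le hlt
  have h₁ := hq.not_prop_of_gt (Γ.f_lt_f_succ_left (by omega))
  have h₂ := hq.not_prop_of_gt (Γ.f_lt_f_succ_right (by omega))
  simp only [mem_sdiff, mem_singleton_iff, not_and, not_not] at h₁ h₂
  have := Γ.eq_of_f_eq (by omega) (by omega)
    ((h₁ (Γ.f_mem_carrier (by omega))).trans (h₂ (Γ.f_mem_carrier (by omega))).symm)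
  omega

lemma maximal_sdiff_pair_lt_iff (hab : a + b + 1 = n) {q : α} :
    Maximal (· ∈ (Γ.carrier \ {Γ.f k (a + 1) b}) \ {Γ.f k a (b + 1)}) q ∧ q < Γ.f k a (b + 1) ↔
      q = Γ.f k a b := by
  constructor
  · rintro ⟨hq, hlt⟩
    obtain ⟨x, y, -, -, hxy, rfl⟩ := Γ.exists_eq_of_lt (by omega) hlt
    have hnb : ∀ {x' y'}, x' + y' ≤ n → Γ.f k x y < Γ.f k x' y' →
        Γ.f k x' y' = Γ.f k (a + 1) b ∨ Γ.f k x' y' = Γ.f k a (b + 1) := by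
      intro x' y' h' hlt'
      by_contra hne
      rw [not_or] at hne
      exact hq.not_prop_of_gt hlt' ⟨⟨Γ.f_mem_carrier h', hne.1⟩, hne.2⟩
    obtain ⟨rfl, rfl⟩ : x = a ∧ y = b := by
      rcases hnb (by omega) (Γ.f_lt_f_succ_left (by omega)) with e₁ | e₁ <;>
        rcases hnb (by omega) (Γ.f_lt_f_succ_right (by omega)) with e₂ | e₂ <;>
        have := Γ.eq_of_f_eq (by omega) (by omega) e₁ <;>
        have := Γ.eq_of_f_eq (by omega) (by omega) e₂ <;>
        omega
    rfl
  · rintro rfl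
    refine ⟨maximal_iff_forall_gt.2 ⟨⟨⟨Γ.f_mem_carrier (by omega), fun he => ?_⟩, fun he => ?_⟩,
      ?_⟩, Γ.f_lt_f_succ_right (by omega)⟩
    · have := Γ.eq_of_f_eq (by omega) (by omega) he
      omega
    · have := Γ.eq_of_f_eq (by omega) (by omega) he
      omega
    · rintro _ hlt ⟨⟨⟨k', x, y, hxy, rfl⟩, hu⟩, hv⟩
      obtain ⟨rfl, hx, hy, hs⟩ := (Γ.f_lt_f_iff (by omega) hxy).1 hlt
      rcases (by omega : (x = a + 1 ∧ y = b) ∨ (x = a ∧ y = b + 1)) with ⟨rfl, rfl⟩ | ⟨rfl, rfl⟩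
      · exact hu rfl
      · exact hv rfl


section Extend

variable (r : Fin d → ℕ → ℕ → α)
  (hr : ∀ k a b, a + b = n + 1 → Iio (r k a b) = Γ.below k a b)

include hr

lemma r_notMem_carrier (hab : a + b = n + 1) : r k a b ∉ Γ.carrier := by
  rintro ⟨k', i, j, hij, he⟩
  have hmem : Γ.f k (min a n) (n - min a n) ∈ Iio (r k a b) := by
    rw [hr k a b hab]
    exact (Γ.f_mem_below_iff (by omega)).2 ⟨rfl, by omega, by omega⟩
  rw [← he] at hmem
  exact (Γ.maximal_iff.2 ⟨k, _, _, by omega, rfl⟩).not_gt (Γ.f_mem_carrier hij) hmem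

lemma f_le_r_iff (hij : i + j ≤ n) (hab : a + b = n + 1) :
    Γ.f k i j ≤ r k' a b ↔ k = k' ∧ i ≤ a ∧ j ≤ b := by
  have hne : Γ.f k i j ≠ r k' a b := fun h =>
    Γ.r_notMem_carrier r hr hab (h ▸ Γ.f_mem_carrier hij)
  rw [hne.le_iff_lt, ← mem_Iio, hr k' a b hab, Γ.f_mem_below_iff hij]

lemma not_r_le_f (hij : i + j ≤ n) (hab : a + b = n + 1) : ¬ r k a b ≤ Γ.f k' i j :=
  fun h => Γ.r_notMem_carrier r hr hab (Γ.isLowerSet_carrier h (Γ.f_mem_carrier hij))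

lemma eq_of_r_eq (hab : a + b = n + 1) (hab' : a' + b' = n + 1) (h : r k a b = r k' a' b') :
    k = k' := by
  have hmem : Γ.f k 0 0 ∈ Γ.below k' a' b' := by
    rw [← hr k' a' b' hab', ← h, hr k a b hab]
    exact (Γ.f_mem_below_iff (by omega)).2 ⟨rfl, by omega, by omega⟩
  exact ((Γ.f_mem_below_iff (by omega)).1 hmem).1

variable (hinj : ∀ k a b a' b', a + b = n + 1 → a' + b' = n + 1 → r k a b = r k a' b' → a = a')

include hinj in
lemma r_le_r_iff (hab : a + b = n + 1) (hab' : a' + b' = n + 1) :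
    r k a b ≤ r k' a' b' ↔ k = k' ∧ a ≤ a' ∧ b ≤ b' := by
  constructor
  · intro hle
    rcases hle.eq_or_lt with he | hlt
    · obtain rfl := Γ.eq_of_r_eq r hr hab hab' he
      have := hinj k a b a' b' hab hab' he
      exact ⟨rfl, by omega, by omega⟩
    · rw [← mem_Iio, hr k' a' b' hab'] at hlt
      exact absurd (Γ.below_subset_carrier hlt) (Γ.r_notMem_carrier r hr hab)
  · rintro ⟨rfl, ha, hb⟩
    obtain rfl : a = a' := by omega
    obtain rfl : b = b' := by omega
    rfl

def extend : Grid α d (n + 1) where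
  f k i j := if i + j ≤ n then Γ.f k i j else r k i j
  le_iff k i j k' i' j' h₁ h₂ := by
    by_cases h : i + j ≤ n <;> by_cases h' : i' + j' ≤ n <;> simp only [h, h', if_true, if_false]
    · exact Γ.le_iff h h'
    · exact Γ.f_le_r_iff r hr h (by omega)
    · exact iff_of_false (Γ.not_r_le_f r hr h' (by omega)) (by omega)
    · exact Γ.r_le_r_iff r hr hinj (by omega) (by omega)
  exists_eq_of_le k i j hij q hq := by
    by_cases h : i + j ≤ n
    · simp only [h, if_true] at hq
      obtain ⟨k', i', j', h', rfl⟩ := Γ.exists_eq_of_le h q hq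
      exact ⟨k', i', j', by omega, if_pos h'⟩
    · rcases hq.eq_or_lt with rfl | hlt
      · exact ⟨k, i, j, hij, rfl⟩
      · simp only [h, if_false] at hlt
        rw [← mem_Iio, hr k i j (by omega)] at hlt
        obtain ⟨x, y, hxy, -, -, rfl⟩ := hlt
        exact ⟨k, x, y, by omega, if_pos hxy⟩

lemma extend_f_of_le (hij : i + j ≤ n) : (Γ.extend r hr hinj).f k i j = Γ.f k i j := if_pos hij

theorem addable_carrier_subset_extend (h : HasAddableExcess d α) :
    addable Γ.carrier ⊆ (Γ.extend r hr hinj).carrier := by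
  set N := (fun t : Fin d × Fin (n + 2) => r t.1 t.2 (n + 1 - t.2)) '' univ
  have hN : N ⊆ addable Γ.carrier := by
    rintro _ ⟨⟨k, a⟩, -, rfl⟩
    dsimp only
    refine ⟨Γ.r_notMem_carrier r hr (by omega), ?_⟩
    rw [hr k a _ (by omega)]
    exact Γ.below_subset_carrier
  have hNcard : N.ncard = d * (n + 2) := by
    rw [InjOn.ncard_image, ncard_univ, Nat.card_eq_fintype_card, Fintype.card_prod,
      Fintype.card_fin, Fintype.card_fin]
    rintro ⟨k, a⟩ - ⟨k', a'⟩ - he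
    dsimp only at he
    obtain rfl := Γ.eq_of_r_eq r hr (by omega) (by omega) he
    simp only [Prod.mk.injEq, true_and]
    exact Fin.ext (hinj _ _ _ _ _ (by omega) (by omega) he)
  obtain ⟨hfin, hcard⟩ := h _ Γ.carrier_finite Γ.isLowerSet_carrier
  rw [← eq_of_subset_of_ncard_le hN (by rw [hcard, Γ.ncard_maximal, hNcard]; ring_nf; rfl) hfin]
  rintro _ ⟨⟨k, a⟩, -, rfl⟩
  exact ⟨k, a, n + 1 - a, by omega, if_neg (by omega)⟩

end Extend

section Existence

variable (h : HasAddableExcess d α)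
include h

theorem exists_Iio_eq_Iic_corner (Γ : Grid α d (n + 1)) (k : Fin d) :
    ∃ r, Iio r = Iic (Γ.f k (n + 1) 0) := by
  have hIio : Iio (Γ.f k (n + 1) 0) = Iic (Γ.f k n 0) := by
    ext q
    refine ⟨fun hq => ?_, fun hq => lt_of_le_of_lt hq (Γ.f_lt_f_succ_left (by omega))⟩
    obtain ⟨x, y, hx, hy, hxy, rfl⟩ := Γ.exists_eq_of_lt (a := n + 1) (b := 0) le_rfl hq
    exact (Γ.le_iff (by omega) (by omega)).2 ⟨rfl, by omega, hy⟩
  have key := ncard_Iio_eq_Iic_add_ncard_maximal_Iio h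
    (hIio ▸ Γ.carrier_finite.subset (Γ.Iic_subset_carrier (by omega)))
  rw [hIio, show {q | Maximal (· ∈ Iic (Γ.f k n 0)) q} = {Γ.f k n 0} by ext; simp,
    ncard_singleton] at key
  exact nonempty_of_ncard_ne_zero (s := {r | Iio r = Iic (Γ.f k (n + 1) 0)}) (by omega)

theorem exists_Iio_eq_Iic_union_Iic (Γ : Grid α d (n + 1)) (k : Fin d) {a b : ℕ}
    (hab : a + b = n) : ∃ r, Iio r = Iic (Γ.f k (a + 1) b) ∪ Iic (Γ.f k a (b + 1)) := by
  set u := Γ.f k (a + 1) b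
  set v := Γ.f k a (b + 1)
  have hu : Maximal (· ∈ Γ.carrier) u := Γ.maximal_iff.2 ⟨k, _, _, by omega, rfl⟩
  have hv : Maximal (· ∈ Γ.carrier) v := Γ.maximal_iff.2 ⟨k, _, _, by omega, rfl⟩
  have huv : u ≠ v := fun he => by
    have := Γ.eq_of_f_eq (by omega) (by omega) he
    omega
  set A := {r | v < r ∧ Iio r ⊆ Γ.carrier}
  set B := {r | v < r ∧ Iio r ⊆ Γ.carrier \ {u}}
  have hA : A.ncard = 2 := by
    have key :=
      ncard_above_add_ncard_maximal_sdiff_below h Γ.carrier_finite Γ.isLowerSet_carrier hv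
    rwa [show {q | Maximal (· ∈ Γ.carrier \ {v}) q ∧ q < v} = ∅ from
      eq_empty_of_forall_notMem fun q hq => Γ.not_maximal_sdiff_of_lt (by omega) hq.1 hq.2,
      ncard_empty, add_zero] at key
  have hB : B.ncard = 1 := by
    have hv' : Maximal (· ∈ Γ.carrier \ {u}) v :=
      hv.mono (fun _ hq => hq.1) ⟨hv.prop, huv.symm⟩
    have key := ncard_above_add_ncard_maximal_sdiff_below h Γ.carrier_finite.sdiff
      (isLowerSet_sdiff_singleton_of_maximal Γ.isLowerSet_carrier hu) hv'
    rw [show {q | Maximal (· ∈ (Γ.carrier \ {u}) \ {v}) q ∧ q < v} = {Γ.f k a b} from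
      ext fun q => Γ.maximal_sdiff_pair_lt_iff (by omega), ncard_singleton] at key
    change B.ncard + 1 = 2 at key
    omega
  -- of the two elements covering `v` inside the grid exactly one avoids `u`; the other one is `r`
  obtain ⟨r, ⟨hvr, hrC⟩, hrB⟩ : (A \ B).Nonempty := by
    refine nonempty_of_ncard_ne_zero ?_
    rw [ncard_sdiff (show B ⊆ A from fun r hr => ⟨hr.1, hr.2.trans sdiff_subset⟩)
      (finite_of_ncard_ne_zero (by omega))]
    omega
  have hur : u < r := by
    by_contra hur
    exact hrB ⟨hvr, fun q hq => ⟨hrC hq, fun hqu => hur ((mem_singleton_iff.1 hqu) ▸ hq)⟩⟩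
  have hfin : (Iio r).Finite := Γ.carrier_finite.subset hrC
  have hmax : {q | Maximal (· ∈ Iio r) q} = {u, v} := by
    have hsub : ({u, v} : Set α) ⊆ {q | Maximal (· ∈ Iio r) q} := by
      rintro _ (rfl | rfl)
      · exact hu.mono (fun _ hq => hrC hq) hur
      · exact hv.mono (fun _ hq => hrC hq) hvr
    have key := ncard_Iio_eq_Iic_add_ncard_maximal_Iio h hfin
    exact (eq_of_subset_of_ncard_le hsub (by rw [ncard_pair huv]; omega)
      (hfin.subset fun q hq => hq.prop)).symm
  exact ⟨r, eq_Iic_union_Iic_of_maximal_eq hfin (isLowerSet_Iio r) hmax⟩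


theorem exists_grid_zero : ∃ Γ : Grid α d 0, addable ∅ ⊆ Γ.carrier := by
  obtain ⟨hfin, hcard⟩ := h ∅ finite_empty isLowerSet_empty
  have : Finite (addable (∅ : Set α)) := hfin.to_subtype
  have hcard' : Nat.card (addable (∅ : Set α)) = d := by
    rw [Nat.card_coe_set_eq, hcard]
    simp
  let e : Fin d ≃ addable (∅ : Set α) := (Finite.equivFinOfCardEq hcard').symm
  have hle : ∀ k (q : α), q ≤ e k ↔ q = e k := fun k q =>
    ⟨fun hq => hq.eq_or_lt.resolve_right fun hlt => (e k).2.2 hlt, fun hq => hq.le⟩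
  refine ⟨⟨fun k _ _ => e k, fun k i j k' i' j' h₁ h₂ => ?_, fun k _ _ _ q hq => ?_⟩,
    fun p hp => ⟨e.symm ⟨p, hp⟩, 0, 0, le_rfl, by simp⟩⟩
  · rw [hle, Subtype.val_inj, e.apply_eq_iff_eq]
    omega
  · exact ⟨k, 0, 0, le_rfl, ((hle k q).1 hq).symm⟩

theorem exists_extension_zero (Γ : Grid α d 0) :
    ∃ Δ : Grid α d 1, (∀ k i j, i + j ≤ 0 → Δ.f k i j = Γ.f k i j) ∧
      addable Γ.carrier ⊆ Δ.carrier := by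
  have htwo : ∀ k, ∃ r₁ r₂, r₁ ≠ r₂ ∧ Iio r₁ = Iic (Γ.f k 0 0) ∧ Iio r₂ = Iic (Γ.f k 0 0) := by
    intro k
    have hIio : Iio (Γ.f k 0 0) = ∅ := eq_empty_of_forall_notMem fun q hq => by
      obtain ⟨x, y, -, -, hxy, -⟩ := Γ.exists_eq_of_lt (a := 0) (b := 0) le_rfl hq
      omega
    have key := ncard_Iio_eq_Iic_add_ncard_maximal_Iio h (hIio ▸ finite_empty)
    rw [hIio, show {q | Maximal (· ∈ (∅ : Set α)) q} = ∅ from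
      eq_empty_of_forall_notMem fun q hq => hq.prop, ncard_empty, add_zero] at key
    obtain ⟨r₁, r₂, hne, he⟩ := ncard_eq_two.1 key
    exact ⟨r₁, r₂, hne, (he ▸ mem_insert _ _ : r₁ ∈ {r | Iio r = _}),
      (he ▸ mem_insert_of_mem _ rfl : r₂ ∈ {r | Iio r = _})⟩
  -- the two elements covering only `Γ.f k 0 0` become the cells `(1, 0)` and `(0, 1)`, in
  -- either order
  choose r₁ r₂ hne h₁ h₂ using htwo
  let r : Fin d → ℕ → ℕ → α := fun k a _ => if a = 0 then r₂ k else r₁ k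
  have hr : ∀ k a b, a + b = 0 + 1 → Iio (r k a b) = Γ.below k a b := by
    intro k a b _
    rw [Γ.below_min, Nat.min_zero, Nat.min_zero, ← Γ.Iic_eq_below le_rfl]
    by_cases ha : a = 0
    · simp only [r, ha, if_true, h₂]
    · simp only [r, ha, if_false, h₁]
  have hinj : ∀ k a b a' b', a + b = 0 + 1 → a' + b' = 0 + 1 → r k a b = r k a' b' →
      a = a' := by
    intro k a b a' b' hab hab' he
    by_cases ha : a = 0 <;> by_cases ha' : a' = 0 <;>
      simp only [r, ha, ha', if_true, if_false] at he
    · omega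
    · exact absurd he.symm (hne k)
    · exact absurd he (hne k)
    · omega
  exact ⟨Γ.extend r hr hinj, fun k i j hij => Γ.extend_f_of_le r hr hinj hij,
    Γ.addable_carrier_subset_extend r hr hinj h⟩

theorem exists_extension_succ (Γ : Grid α d (n + 1)) :
    ∃ Δ : Grid α d (n + 2), (∀ k i j, i + j ≤ n + 1 → Δ.f k i j = Γ.f k i j) ∧
      addable Γ.carrier ⊆ Δ.carrier := by
  have hex : ∀ k a b, ∃ r, a + b = n + 2 → Iio r = Γ.below k a b := by
    intro k a b
    refine (em (a + b = n + 2)).elim (fun hab => ?_) fun hab => ⟨Γ.f k 0 0, (absurd · hab)⟩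
    obtain _ | b := b
    · obtain ⟨r, hr⟩ := exists_Iio_eq_Iic_corner h Γ k
      refine ⟨r, fun _ => ?_⟩
      rw [hr, Γ.Iic_eq_below (a := n + 1) (b := 0) (by omega), Γ.below_min (a := a)]
      congr 1; omega
    obtain _ | a := a
    · obtain ⟨r, hr⟩ := exists_Iio_eq_Iic_corner h Γ.swap k
      refine ⟨r, fun _ => ?_⟩
      rw [hr, show Γ.swap.f k (n + 1) 0 = Γ.f k 0 (n + 1) from rfl,
        Γ.Iic_eq_below (a := 0) (b := n + 1) (by omega), Γ.below_min (b := b + 1)]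
      congr 1; omega
    obtain ⟨r, hr⟩ := exists_Iio_eq_Iic_union_Iic h Γ k (a := a) (b := b) (by omega)
    exact ⟨r, fun _ => by rw [hr, Γ.below_succ_succ (by omega)]⟩
  choose r hr using hex
  have hinj : ∀ k a b a' b', a + b = n + 1 + 1 → a' + b' = n + 1 + 1 → r k a b = r k a' b' →
      a = a' := fun k a b a' b' hab hab' he =>
    Γ.eq_of_below_eq (by omega) hab hab' (by rw [← hr k a b hab, he, hr k a' b' hab'])
  exact ⟨Γ.extend r (fun k a b => hr k a b) hinj,
    fun k i j hij => Γ.extend_f_of_le r _ hinj hij, Γ.addable_carrier_subset_extend r _ hinj h⟩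

theorem exists_extension (Γ : Grid α d n) :
    ∃ Δ : Grid α d (n + 1), (∀ k i j, i + j ≤ n → Δ.f k i j = Γ.f k i j) ∧
      addable Γ.carrier ⊆ Δ.carrier := by
  cases n with
  | zero => exact exists_extension_zero h Γ
  | succ n => exact exists_extension_succ h Γ

end Existence

end Grid

section Labelling

variable {α : Type*} [PartialOrder α] {d : ℕ}

theorem exists_grid_sequence (h : HasAddableExcess d α) :
    ∃ G : ∀ n, Grid α d n, addable ∅ ⊆ (G 0).carrier ∧
      ∀ n, (∀ k i j, i + j ≤ n → (G (n + 1)).f k i j = (G n).f k i j) ∧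
        (G n).carrier ∪ addable (G n).carrier ⊆ (G (n + 1)).carrier := by
  obtain ⟨Γ₀, hΓ₀⟩ := Grid.exists_grid_zero h
  choose next hnext_f hnext_add using fun n (Γ : Grid α d n) => Grid.exists_extension h Γ
  refine ⟨fun n => Nat.rec Γ₀ (fun n Γ => next n Γ) n, hΓ₀, fun n => ⟨hnext_f n _, ?_⟩⟩
  refine union_subset ?_ (hnext_add n _)
  rintro _ ⟨k, i, j, hij, rfl⟩
  exact ⟨k, i, j, by omega, hnext_f n _ k i j hij⟩

theorem exists_cell_labelling (h : HasAddableExcess d α) (hfin : ∀ p : α, (Iio p).Finite) :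
    ∃ g : Fin d → ℕ × ℕ → α,
      (∀ k c k' c', g k c ≤ g k' c' ↔ k = k' ∧ c ≤ c') ∧ ∀ p, ∃ k c, g k c = p := by
  obtain ⟨G, hG₀, hG⟩ := exists_grid_sequence h
  have hagree : ∀ n m, n ≤ m → ∀ k i j, i + j ≤ n → (G m).f k i j = (G n).f k i j := by
    intro n m hnm
    induction m, hnm using Nat.le_induction with
    | base => exact fun _ _ _ _ => rfl
    | succ m hnm ih =>
      intro k i j hij
      rw [← ih k i j hij]
      exact (hG m).1 k i j (by omega)
  have hmem : ∀ N (p : α), (Iio p).ncard ≤ N → p ∈ (G N).carrier := by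
    intro N
    induction N with
    | zero =>
      intro p hp
      exact hG₀ ⟨notMem_empty p, by rw [(ncard_eq_zero (hfin p)).1 (by omega)]⟩
    | succ N ih =>
      intro p hp
      have hsub : Iio p ⊆ (G N).carrier := fun q hq =>
        ih q (by have := ncard_lt_ncard (Iio_ssubset_Iio hq) (hfin p); omega)
      by_cases hpN : p ∈ (G N).carrier
      · exact (hG N).2 (Or.inl hpN)
      · exact (hG N).2 (Or.inr ⟨hpN, hsub⟩)
  refine ⟨fun k c => (G (c.1 + c.2)).f k c.1 c.2, fun k c k' c' => ?_, fun p => ?_⟩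
  · set m := max (c.1 + c.2) (c'.1 + c'.2)
    dsimp only
    rw [← hagree _ m (le_max_left _ _) k c.1 c.2 le_rfl,
      ← hagree _ m (le_max_right _ _) k' c'.1 c'.2 le_rfl,
      (G m).le_iff (le_max_left _ _) (le_max_right _ _), Prod.le_def]
  · obtain ⟨k, i, j, hij, hp⟩ := hmem _ p le_rfl
    exact ⟨k, (i, j), (hagree _ _ hij k i j le_rfl).symm.trans hp⟩

end Labelling

section YoungDiagrams

variable {L : Type*} [DistribLattice L] [OrderBot L] {ι : Type*} [Fintype ι]

theorem nonempty_orderIso_pi_youngDiagram (hlow : ∀ x : L, (Iic x).Finite)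
    (g : ι → ℕ × ℕ → SupIrreds L) (hg : ∀ k c k' c', g k c ≤ g k' c' ↔ k = k' ∧ c ≤ c')
    (hsurj : ∀ p, ∃ k c, g k c = p) : Nonempty (L ≃o (ι → YoungDiagram)) := by
  classical
  have hcells : ∀ (x : L) k, {c | (g k c : L) ≤ x}.Finite := fun x k =>
    (hlow x).preimage fun c _ c' _ he => by
      have he : g k c = g k c' := Subtype.ext he
      exact le_antisymm ((hg k c k c').1 he.le).2 ((hg k c' k c).1 he.ge).2
  let young (x : L) (k : ι) : YoungDiagram :=
    ⟨(hcells x k).toFinset, fun c c' hc' hc => by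
      simp only [Finite.coe_toFinset, mem_ofPred_eq] at hc ⊢
      exact le_trans ((hg k c' k c).2 ⟨rfl, hc'⟩) hc⟩
  have hmem : ∀ x k c, c ∈ young x k ↔ (g k c : L) ≤ x := fun x k c => by
    rw [← YoungDiagram.mem_cells]
    exact Finite.mem_toFinset _
  have hle : ∀ x y, young x ≤ young y ↔ x ≤ y := by
    intro x y
    refine ⟨fun hxy => (le_iff_irredsBelow_subset hlow).2 fun p hp => ?_,
      fun hxy k c hc => (hmem y k c).2 (((hmem x k c).1 hc).trans hxy)⟩
    obtain ⟨k, c, rfl⟩ := hsurj p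
    exact (hmem y k c).1 (hxy k ((hmem x k c).2 hp))
  refine ⟨OrderIso.ofSurjective (OrderEmbedding.ofMapLEIff young hle) fun μ => ?_⟩
  refine ⟨Finset.univ.sup fun k => (μ k).cells.sup fun c => (g k c : L), funext fun k => ?_⟩
  ext c
  rw [YoungDiagram.mem_cells, YoungDiagram.mem_cells, OrderEmbedding.coe_ofMapLEIff, hmem,
    (g k c).2.supPrime.le_finset_sup]
  simp only [Finset.mem_univ, true_and, (g k c).2.supPrime.le_finset_sup, Subtype.coe_le_coe, hg]
  constructor
  · rintro ⟨_, c', hc', rfl, hcc'⟩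
    exact (μ k).isLowerSet hcc' hc'
  · exact fun hc => ⟨k, c, hc, rfl, le_rfl⟩

end YoungDiagrams

end DifferentialDistribLattice

theorem unique_d_differential_distributive_lattice_general
    (d : ℕ) (L : Type*) [DistribLattice L] [OrderBot L]
    (hlow : ∀ x : L, {y : L | y ≤ x}.Finite)
    (hcov : ∀ x : L, {y : L | x ⋖ y}.Finite)
    (hdiff : ∀ x : L, {y : L | x ⋖ y}.ncard = {y : L | y ⋖ x}.ncard + d) :
    Nonempty (L ≃o (Fin d → YoungDiagram)) := by
  have hfin : ∀ p : DifferentialDistribLattice.SupIrreds L, (Iio p).Finite := fun p =>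
    (DifferentialDistribLattice.irredsBelow_finite hlow p).subset Iio_subset_Iic_self
  obtain ⟨g, hg, hsurj⟩ := DifferentialDistribLattice.exists_cell_labelling
    (DifferentialDistribLattice.hasAddableExcess_supIrreds hlow hcov hdiff) hfin
  exact DifferentialDistribLattice.nonempty_orderIso_pi_youngDiagram hlow g hg hsurj

/-- Let `d` be a positive integer and let `L` be a
distributive lattice with a least element in which every principal lower set
is finite, every element has finitely many covers, and for every element the
number of covers equals the number of lower covers plus `d`.  Then `L` is
order-isomorphic to `𝕐^{×d} = Fin d → YoungDiagram`, the `d`-fold cartesian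
power of Young's lattice: `𝕐^{×d}` is the unique `d`-differential
finitary distributive lattice. -/
theorem unique_d_differential_distributive_lattice
    (d : ℕ) (hd : 0 < d) (L : Type*) [DistribLattice L] [OrderBot L]
    (hlow : ∀ x : L, {y : L | y ≤ x}.Finite)
    (hcov : ∀ x : L, {y : L | x ⋖ y}.Finite)
    (hdiff : ∀ x : L, {y : L | x ⋖ y}.ncard = {y : L | y ⋖ x}.ncard + d) :
    Nonempty (L ≃o (Fin d → YoungDiagram)) :=
  unique_d_differential_distributive_lattice_general d L hlow hcov hdiff
end
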